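/- arXiv:0901.3205 — 6 statements merged into one kernel-verified Lean document; each statement's English description precedes it below -/
import Mathlib

section
/- Let R be an associative unital ℂ-algebra and n ≥ 2. Then the derived Lie subalgebra 𝔰𝔩_n(R) = [𝔤𝔩_n(R), 𝔤𝔩_n(R)] equals the set of n×n matrices X over R whose trace lies in the ℂ-linear span of the commutators {ab − ba : a, b ∈ R}. Equivalently, 𝔰𝔩_n(R) is the sum of the space of n×n matrices over R with trace zero and the space of scalar matrices c·I with c in the ℂ-linear span of {ab − ba : a, b ∈ R}. -/
/-!
Off-diagonal elementary matrices `E_ij r = [E_ij r, E_jj 1]` and differences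
`E_ii r - E_jj r = [E_ij r, E_ji 1]` are commutators, so every matrix `X` is congruent to
`E_kk (tr X)` modulo `𝔰𝔩_n(R)`, while `E_kk [a, b] = [E_kk a, E_kk b]`. Conversely
`tr [A, B] = ∑ i j, [A_ij, B_ji]`. The second description follows by writing
`X = (X - (tr X / n) • 1) + (tr X / n) • 1`.
-/

open Matrix

section CommutatorSpan

variable (K A : Type*) [CommRing K] [Ring A] [Algebra K A]

def commutatorSpan : Submodule K A :=
  Submodule.span K {x : A | ∃ a b, x = a * b - b * a}

variable {K A}

theorem commutator_mem_commutatorSpan (a b : A) : a * b - b * a ∈ commutatorSpan K A :=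
  Submodule.subset_span ⟨a, b, rfl⟩

end CommutatorSpan

namespace Matrix

variable {K R ι : Type*} [CommRing K] [Ring R] [Algebra K R] [Fintype ι] [DecidableEq ι]

theorem single_mem_commutatorSpan_of_ne {i j : ι} (hij : i ≠ j) (r : R) :
    single i j r ∈ commutatorSpan K (Matrix ι ι R) := by
  have h := commutator_mem_commutatorSpan (K := K) (single i j r) (single j j (1 : R))
  rwa [single_mul_single_same, single_mul_single_of_ne (h := hij.symm), mul_one, sub_zero] at h

theorem single_sub_single_mem_commutatorSpan (i j : ι) (r : R) :
    single i i r - single j j r ∈ commutatorSpan K (Matrix ι ι R) := by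
  have h := commutator_mem_commutatorSpan (K := K) (single i j r) (single j i (1 : R))
  rwa [single_mul_single_same, single_mul_single_same, mul_one, one_mul] at h

theorem single_mem_commutatorSpan {c : R} (hc : c ∈ commutatorSpan K R) (i : ι) :
    single i i c ∈ commutatorSpan K (Matrix ι ι R) := by
  refine (Submodule.span_le (p := (commutatorSpan K _).comap (singleLinearMap K i i))).2 ?_ hc
  rintro _ ⟨a, b, rfl⟩
  rw [SetLike.mem_coe, Submodule.mem_comap, map_sub]
  simpa using commutator_mem_commutatorSpan (K := K) (single i i a) (single i i b)

theorem sub_single_trace_mem_commutatorSpan (i₀ : ι) (X : Matrix ι ι R) :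
    X - single i₀ i₀ (trace X) ∈ commutatorSpan K (Matrix ι ι R) := by
  induction X using Matrix.induction_on' with
  | h_zero => simp
  | h_add p q hp hq =>
    rw [trace_add, single_add, add_sub_add_comm]
    exact add_mem hp hq
  | h_std_basis i j r =>
    obtain rfl | hij := eq_or_ne i j
    · rw [trace_single_eq_same]
      exact single_sub_single_mem_commutatorSpan i i₀ r
    · rw [trace_single_eq_of_ne i j r hij, single_zero, sub_zero]
      exact single_mem_commutatorSpan_of_ne hij r

theorem trace_mem_commutatorSpan {X : Matrix ι ι R} (hX : X ∈ commutatorSpan K (Matrix ι ι R)) :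
    trace X ∈ commutatorSpan K R := by
  refine (Submodule.span_le (p := (commutatorSpan K R).comap (traceLinearMap ι K R))).2 ?_ hX
  rintro _ ⟨A, B, rfl⟩
  have hsum : trace (A * B - B * A) = ∑ i, ∑ j, (A i j * B j i - B j i * A i j) := by
    rw [trace_sub]
    simp only [trace, diag_apply, mul_apply, Finset.sum_sub_distrib]
    rw [Finset.sum_comm (f := fun i j => B i j * A j i)]
  rw [SetLike.mem_coe, Submodule.mem_comap, traceLinearMap_apply, hsum]
  exact Submodule.sum_mem _ fun i _ => Submodule.sum_mem _ fun j _ =>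
    commutator_mem_commutatorSpan _ _

theorem commutatorSpan_eq_comap_trace :
    commutatorSpan K (Matrix ι ι R) = (commutatorSpan K R).comap (traceLinearMap ι K R) := by
  refine le_antisymm (fun X hX => trace_mem_commutatorSpan hX) fun X hX => ?_
  cases isEmpty_or_nonempty ι with
  | inl _ => exact Subsingleton.elim X 0 ▸ zero_mem _
  | inr h =>
    obtain ⟨i₀⟩ := h
    simpa using add_mem (sub_single_trace_mem_commutatorSpan (K := K) i₀ X)
      (single_mem_commutatorSpan hX i₀)

theorem trace_smul_one (c : R) : trace (c • (1 : Matrix ι ι R)) = Fintype.card ι • c := by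
  simp [trace, Finset.sum_const]

theorem smul_one_mem_commutatorSpan {c : R} (hc : c ∈ commutatorSpan K R) :
    c • (1 : Matrix ι ι R) ∈ commutatorSpan K (Matrix ι ι R) := by
  rw [commutatorSpan_eq_comap_trace, Submodule.mem_comap, traceLinearMap_apply, trace_smul_one]
  exact Submodule.smul_of_tower_mem _ _ hc

theorem commutatorSpan_eq_ker_trace_sup (hι : IsUnit (Fintype.card ι : K)) :
    commutatorSpan K (Matrix ι ι R) = LinearMap.ker (traceLinearMap ι K R) ⊔
      Submodule.span K {X | ∃ c ∈ commutatorSpan K R, X = c • (1 : Matrix ι ι R)} := by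
  refine le_antisymm (fun X hX => ?_) (sup_le (fun X hX => ?_) ?_)
  · set t : R := (↑hι.unit⁻¹ : K) • trace X
    have ht : t ∈ commutatorSpan K R := Submodule.smul_mem _ _ (trace_mem_commutatorSpan hX)
    have hker : X - t • 1 ∈ LinearMap.ker (traceLinearMap ι K R) := by
      rw [LinearMap.mem_ker, traceLinearMap_apply, trace_sub, trace_smul_one,
        ← Nat.cast_smul_eq_nsmul K, smul_smul]
      simp
    exact Submodule.mem_sup.2
      ⟨_, hker, _, Submodule.subset_span ⟨t, ht, rfl⟩, sub_add_cancel X _⟩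
  · rw [commutatorSpan_eq_comap_trace, Submodule.mem_comap, (LinearMap.mem_ker.1 hX)]
    exact zero_mem _
  · rw [Submodule.span_le]
    rintro _ ⟨c, hc, rfl⟩
    exact smul_one_mem_commutatorSpan hc

end Matrix

theorem stmt_0 (R : Type) [Ring R] [Algebra ℂ R] (n : ℕ) (hn : 2 ≤ n) :
    Submodule.span ℂ {X : Matrix (Fin n) (Fin n) R | ∃ A B, X = A * B - B * A}
      = (Submodule.span ℂ {c : R | ∃ a b, c = a * b - b * a}).comap
          (Matrix.traceLinearMap (Fin n) ℂ R)
    ∧ Submodule.span ℂ {X : Matrix (Fin n) (Fin n) R | ∃ A B, X = A * B - B * A}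
      = LinearMap.ker (Matrix.traceLinearMap (Fin n) ℂ R)
        ⊔ Submodule.span ℂ {X : Matrix (Fin n) (Fin n) R |
            ∃ c ∈ Submodule.span ℂ {c : R | ∃ a b, c = a * b - b * a},
              X = c • (1 : Matrix (Fin n) (Fin n) R)} := by
  have hunit : IsUnit (Fintype.card (Fin n) : ℂ) := by
    rw [Fintype.card_fin, isUnit_iff_ne_zero, Nat.cast_ne_zero]
    omega
  exact ⟨commutatorSpan_eq_comap_trace, commutatorSpan_eq_ker_trace_sup hunit⟩
end

section
/- Let R be an associative unital ℂ-algebra and n ≥ 2. Then 𝔰𝔩_n(R) decomposes as an internal direct sum of ℂ-subspaces 𝔰𝔩_n(R) = N⁻ ⊕ H ⊕ N⁺, where N⁻ (resp. N⁺) is the space of strictly lower (resp. strictly upper) triangular n×n matrices over R, and H is the space of diagonal n×n matrices over R whose trace lies in the ℂ-linear span of the commutators {ab − ba : a, b ∈ R}. -/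
/-!
STATEMENT 1: For an associative unital ℂ-algebra `R` and `n ≥ 2`,
`𝔰𝔩_n(R)` (the ℂ-linear span of brackets of `n × n` matrices over `R`) decomposes as an
internal direct sum `N⁻ ⊕ H ⊕ N⁺` of ℂ-subspaces, where `N⁻` (resp. `N⁺`) consists of
the strictly lower (resp. strictly upper) triangular matrices and `H` consists of the
diagonal matrices whose trace lies in the span of commutators of `R`.
-/

/-- The ℂ-linear span of commutators of `R`. -/
def commSpan (R : Type) [Ring R] [Algebra ℂ R] : Submodule ℂ R :=
  Submodule.span ℂ {c : R | ∃ a b, c = a * b - b * a}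

/-- Strictly lower triangular `n × n` matrices over `R`. -/
def strictLower (R : Type) [Ring R] [Algebra ℂ R] (n : ℕ) :
    Submodule ℂ (Matrix (Fin n) (Fin n) R) where
  carrier := {X | ∀ i j : Fin n, i ≤ j → X i j = 0}
  add_mem' {a b} ha hb i j h := by simp [Matrix.add_apply, ha i j h, hb i j h]
  zero_mem' i j h := by simp
  smul_mem' c X hX i j h := by simp [Matrix.smul_apply, hX i j h]

/-- Strictly upper triangular `n × n` matrices over `R`. -/
def strictUpper (R : Type) [Ring R] [Algebra ℂ R] (n : ℕ) :
    Submodule ℂ (Matrix (Fin n) (Fin n) R) where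
  carrier := {X | ∀ i j : Fin n, j ≤ i → X i j = 0}
  add_mem' {a b} ha hb i j h := by simp [Matrix.add_apply, ha i j h, hb i j h]
  zero_mem' i j h := by simp
  smul_mem' c X hX i j h := by simp [Matrix.smul_apply, hX i j h]

/-- Diagonal `n × n` matrices over `R` whose trace lies in the span of commutators. -/
def diagComm (R : Type) [Ring R] [Algebra ℂ R] (n : ℕ) :
    Submodule ℂ (Matrix (Fin n) (Fin n) R) where
  carrier := {X | (∀ i j : Fin n, i ≠ j → X i j = 0) ∧ X.trace ∈ commSpan R}
  add_mem' {a b} ha hb := by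
    refine ⟨fun i j h => by simp [Matrix.add_apply, ha.1 i j h, hb.1 i j h], ?_⟩
    rw [Matrix.trace_add]
    exact (commSpan R).add_mem ha.2 hb.2
  zero_mem' := ⟨fun i j h => by simp, by simp [Matrix.trace_zero]⟩
  smul_mem' c X hX := by
    refine ⟨fun i j h => by simp [Matrix.smul_apply, hX.1 i j h], ?_⟩
    rw [Matrix.trace_smul]
    exact (commSpan R).smul_mem c hX.2


/-!
The trace map sends `𝔰𝔩_n(R)` into `[R, R]`, and conversely every matrix whose trace lies in
`[R, R]` is a sum of commutators: modulo `𝔰𝔩_n(R)`, off-diagonal elementary matrices vanish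
(`E_ij r = [E_ij r, E_jj]`), all diagonal positions are identified (`E_ii r - E_jj r = [E_ij r, E_ji]`),
so `X ≡ E_11 (tr X)`, which is the image of `tr X ∈ [R, R]` under the map `r ↦ E_11 r` preserving
commutators. Hence `𝔰𝔩_n(R) = {X | tr X ∈ [R, R]}`, and splitting such an `X` into its strictly
lower, diagonal and strictly upper parts gives the sum; the sum is direct because the three parts
are supported on disjoint sets of positions.
-/

open Matrix

section CommSpan

variable {R : Type} [Ring R] [Algebra ℂ R]

theorem commutator_mem_commSpan (a b : R) : a * b - b * a ∈ commSpan R :=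
  Submodule.subset_span ⟨a, b, rfl⟩

variable {ι : Type} [Fintype ι]

theorem trace_commutator_mem_commSpan (A B : Matrix ι ι R) :
    (A * B - B * A).trace ∈ commSpan R := by
  have : (A * B - B * A).trace = ∑ i, ∑ k, (A i k * B k i - B k i * A i k) := by
    rw [trace_sub]
    simp only [trace, diag_apply, mul_apply, Finset.sum_sub_distrib]
    rw [Finset.sum_comm (f := fun i k => B i k * A k i)]
  rw [this]
  exact Submodule.sum_mem _ fun i _ => Submodule.sum_mem _ fun k _ => commutator_mem_commSpan _ _

variable [DecidableEq ι]

theorem trace_mem_commSpan {X : Matrix ι ι R} (hX : X ∈ commSpan (Matrix ι ι R)) :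
    X.trace ∈ commSpan R := by
  have : commSpan (Matrix ι ι R) ≤ (commSpan R).comap (traceLinearMap ι ℂ R) :=
    Submodule.span_le.2 fun _ ⟨A, B, hX⟩ => hX ▸ trace_commutator_mem_commSpan A B
  exact this hX

theorem single_mem_commSpan_of_ne {i j : ι} (h : i ≠ j) (r : R) :
    single i j r ∈ commSpan (Matrix ι ι R) := by
  have : single i j r = single i j r * single j j 1 - single j j 1 * single i j r := by
    rw [single_mul_single_of_ne (h := h.symm), single_mul_single_same, mul_one, sub_zero]
  rw [this]
  exact commutator_mem_commSpan _ _

theorem single_sub_single_mem_commSpan (i j : ι) (r : R) :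
    single i i r - single j j r ∈ commSpan (Matrix ι ι R) := by
  have : single i i r - single j j r = single i j r * single j i 1 - single j i 1 * single i j r := by
    rw [single_mul_single_same, single_mul_single_same, mul_one, one_mul]
  rw [this]
  exact commutator_mem_commSpan _ _

theorem single_mem_commSpan (i : ι) {r : R} (hr : r ∈ commSpan R) :
    single i i r ∈ commSpan (Matrix ι ι R) := by
  have : commSpan R ≤ (commSpan (Matrix ι ι R)).comap (singleLinearMap ℂ i i) := by
    refine Submodule.span_le.2 fun _ ⟨a, b, hr⟩ => hr ▸ ?_
    have hsub : single i i (a * b - b * a) = single i i (a * b) - single i i (b * a) :=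
      map_sub (singleAddMonoidHom i i) _ _
    show single i i (a * b - b * a) ∈ commSpan (Matrix ι ι R)
    rw [hsub, ← single_mul_single_same a i i i b, ← single_mul_single_same b i i i a]
    exact commutator_mem_commSpan _ _
  exact this hr

theorem mem_commSpan_of_trace_mem {X : Matrix ι ι R} (hX : X.trace ∈ commSpan R) :
    X ∈ commSpan (Matrix ι ι R) := by
  rcases isEmpty_or_nonempty ι with _ | ⟨⟨i₀⟩⟩
  · rw [Subsingleton.elim X 0]
    exact zero_mem _
  set π := (commSpan (Matrix ι ι R)).mkQ
  have hoff : ∀ i j, i ≠ j → π (single i j (X i j)) = 0 := fun i j h =>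
    (Submodule.Quotient.mk_eq_zero _).2 (single_mem_commSpan_of_ne h _)
  have hdiag : ∀ i, π (single i i (X i i)) = π (single i₀ i₀ (X i i)) := fun i =>
    (Submodule.Quotient.eq _).2 (single_sub_single_mem_commSpan i i₀ _)
  rw [← Submodule.Quotient.mk_eq_zero]
  calc π X = ∑ i, ∑ j, π (single i j (X i j)) := by
        conv_lhs => rw [matrix_eq_sum_single X]
        simp only [map_sum]
    _ = ∑ i, π (single i i (X i i)) := Finset.sum_congr rfl fun i _ =>
        Finset.sum_eq_single i (fun j _ hj => hoff i j hj.symm) (by simp)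
    _ = π (single i₀ i₀ X.trace) := by
        rw [Finset.sum_congr rfl fun i _ => hdiag i, ← map_sum]
        exact congrArg π (map_sum (singleAddMonoidHom i₀ i₀) (fun i => X i i) _).symm
    _ = 0 := (Submodule.Quotient.mk_eq_zero _).2 (single_mem_commSpan i₀ hX)

end CommSpan

section EntrySupported

variable (K : Type) {ι R : Type} [Semiring K] [AddCommMonoid R] [Module K R]

def entrySupported (s : Set (ι × ι)) : Submodule K (Matrix ι ι R) where
  carrier := {X | ∀ i j, (i, j) ∉ s → X i j = 0}
  add_mem' hX hY i j h := by simp [hX i j h, hY i j h]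
  zero_mem' _ _ _ := rfl
  smul_mem' c X hX i j h := by simp [hX i j h]

variable {K}

theorem entrySupported_mono {s t : Set (ι × ι)} (h : s ⊆ t) :
    entrySupported K (R := R) s ≤ entrySupported K t :=
  fun _ hX i j hij => hX i j fun hs => hij (h hs)

theorem disjoint_entrySupported {s t : Set (ι × ι)} (h : Disjoint s t) :
    Disjoint (entrySupported K (R := R) s) (entrySupported K t) := by
  refine Submodule.disjoint_def.2 fun X hs ht => ?_
  ext i j
  by_cases hij : (i, j) ∈ s
  · exact ht i j (h.notMem_of_mem_left hij)
  · exact hs i j hij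

theorem inf_sup_eq_bot_of_le_entrySupported {A B C : Submodule K (Matrix ι ι R)}
    {s t u : Set (ι × ι)} (hA : A ≤ entrySupported K s) (hB : B ≤ entrySupported K t)
    (hC : C ≤ entrySupported K u) (hs : Disjoint s (t ∪ u)) : A ⊓ (B ⊔ C) = ⊥ :=
  ((disjoint_entrySupported hs).mono hA <| sup_le
    (hB.trans (entrySupported_mono Set.subset_union_left))
    (hC.trans (entrySupported_mono Set.subset_union_right))).eq_bot

end EntrySupported

section Triangular

variable {R : Type} [Ring R] [Algebra ℂ R] {n : ℕ}

theorem strictLower_le_entrySupported :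
    strictLower R n ≤ entrySupported ℂ {p : Fin n × Fin n | p.2 < p.1} :=
  fun _ hX i j h => hX i j (not_lt.1 h)

theorem diagComm_le_entrySupported :
    diagComm R n ≤ entrySupported ℂ {p : Fin n × Fin n | p.1 = p.2} :=
  fun _ hX i j h => hX.1 i j h

theorem strictUpper_le_entrySupported :
    strictUpper R n ≤ entrySupported ℂ {p : Fin n × Fin n | p.1 < p.2} :=
  fun _ hX i j h => hX i j (not_lt.1 h)

theorem trace_eq_zero_of_mem_strictLower {X : Matrix (Fin n) (Fin n) R}
    (hX : X ∈ strictLower R n) : X.trace = 0 :=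
  Finset.sum_eq_zero fun i _ => hX i i le_rfl

theorem trace_eq_zero_of_mem_strictUpper {X : Matrix (Fin n) (Fin n) R}
    (hX : X ∈ strictUpper R n) : X.trace = 0 :=
  Finset.sum_eq_zero fun i _ => hX i i le_rfl

theorem mem_sup_of_trace_mem {X : Matrix (Fin n) (Fin n) R} (hX : X.trace ∈ commSpan R) :
    X ∈ strictLower R n ⊔ diagComm R n ⊔ strictUpper R n := by
  set L : Matrix (Fin n) (Fin n) R := of fun i j => if j < i then X i j else 0
  set U : Matrix (Fin n) (Fin n) R := of fun i j => if i < j then X i j else 0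
  have hL : L ∈ strictLower R n := fun i j h => if_neg h.not_gt
  have hU : U ∈ strictUpper R n := fun i j h => if_neg h.not_gt
  have hD : diagonal X.diag ∈ diagComm R n :=
    ⟨fun i j h => diagonal_apply_ne _ h, by rwa [trace_diagonal]⟩
  have hsplit : X = L + diagonal X.diag + U := by
    ext i j
    rcases lt_trichotomy i j with h | rfl | h
    · simp [L, U, h, h.not_gt, h.ne]
    · simp [L, U]
    · simp [L, U, h, h.not_gt, h.ne']
  rw [hsplit]
  exact add_mem (add_mem (Submodule.mem_sup_left (Submodule.mem_sup_left hL))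
    (Submodule.mem_sup_left (Submodule.mem_sup_right hD))) (Submodule.mem_sup_right hU)

theorem commSpan_matrix_eq_sup :
    commSpan (Matrix (Fin n) (Fin n) R) = strictLower R n ⊔ diagComm R n ⊔ strictUpper R n := by
  refine le_antisymm (fun X hX => mem_sup_of_trace_mem (trace_mem_commSpan hX))
    (sup_le (sup_le ?_ ?_) ?_) <;> intro X hX <;> apply mem_commSpan_of_trace_mem
  · exact trace_eq_zero_of_mem_strictLower hX ▸ zero_mem _
  · exact hX.2
  · exact trace_eq_zero_of_mem_strictUpper hX ▸ zero_mem _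

end Triangular

theorem stmt_1_general (R : Type) [Ring R] [Algebra ℂ R] (n : ℕ) :
    Submodule.span ℂ {X : Matrix (Fin n) (Fin n) R | ∃ A B, X = A * B - B * A}
        = strictLower R n ⊔ diagComm R n ⊔ strictUpper R n
      ∧ strictLower R n ⊓ (diagComm R n ⊔ strictUpper R n) = ⊥
      ∧ diagComm R n ⊓ (strictLower R n ⊔ strictUpper R n) = ⊥
      ∧ strictUpper R n ⊓ (strictLower R n ⊔ diagComm R n) = ⊥ := by
  have hL := strictLower_le_entrySupported (R := R) (n := n)
  have hD := diagComm_le_entrySupported (R := R) (n := n)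
  have hU := strictUpper_le_entrySupported (R := R) (n := n)
  refine ⟨commSpan_matrix_eq_sup, inf_sup_eq_bot_of_le_entrySupported hL hD hU ?_,
    inf_sup_eq_bot_of_le_entrySupported hD hL hU ?_,
    inf_sup_eq_bot_of_le_entrySupported hU hL hD ?_⟩ <;>
  · refine Set.disjoint_left.2 fun p hp hq => ?_
    simp only [Set.mem_union, Set.mem_ofPred_eq] at hp hq
    omega

theorem stmt_1 (R : Type) [Ring R] [Algebra ℂ R] (n : ℕ) (hn : 2 ≤ n) :
    Submodule.span ℂ {X : Matrix (Fin n) (Fin n) R | ∃ A B, X = A * B - B * A}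
        = strictLower R n ⊔ diagComm R n ⊔ strictUpper R n
      ∧ strictLower R n ⊓ (diagComm R n ⊔ strictUpper R n) = ⊥
      ∧ diagComm R n ⊓ (strictLower R n ⊔ strictUpper R n) = ⊥
      ∧ strictUpper R n ⊓ (strictLower R n ⊔ diagComm R n) = ⊥ :=
  stmt_1_general R n
end

section
/- Let G be a finite group and n ≥ 2. Define κ : 𝔤𝔩_n(ℂ[G]) × 𝔤𝔩_n(ℂ[G]) → ℂ by κ(X, Y) = the coefficient of the identity element of G in the trace of the matrix product X·Y (an element of ℂ[G]). Then κ is a symmetric bilinear form, it is invariant in the sense that κ([X,Y], Z) = κ(X, [Y,Z]) for all X, Y, Z, and its restriction to the derived subalgebra 𝔰𝔩_n(ℂ[G]) is nondegenerate. (On basis elements, κ(E_{ab}g₁, E_{cd}g₂) = Tr(E_{ab}E_{cd})·δ_{g₁ = g₂⁻¹}.) -/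
/-!
Write `κ = τ ∘ tr` with `τ u = u(1)` the canonical trace of `ℂ[G]`. Since `τ(uv) = τ(vu)`, the form
is symmetric and invariant, and it is nondegenerate on all of `𝔤𝔩_n(ℂ[G])`: pairing `X` with
`E_{ji} t⁻¹` reads off the coefficient of `t` in `X_{ij}`. If `X ∈ 𝔰𝔩_n` is orthogonal to `𝔰𝔩_n`,
then `κ([X,A],B) = κ(X,[A,B]) = 0` for all `A, B`, so `X` is central, i.e. `X = z·1` with `z`
central in `ℂ[G]`, and the coefficients of `z` form a class function. For every class function `f`,
`u ↦ ∑ f(g) u(g)` is again a trace on `ℂ[G]`, hence vanishes on `tr X = n z`; taking for `f` the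
indicator of the conjugacy class of `g` gives `n · |class of g| · z(g) = 0`.
-/

open Finset Matrix

theorem isConj_mul_comm {G : Type*} [Group G] (a b : G) : IsConj (a * b) (b * a) :=
  isConj_iff.2 ⟨b, by group⟩

namespace MonoidAlgebra

section CommSemiring

variable {k G : Type*} [CommSemiring k] [Group G]

theorem coeff_one_mul_comm (u v : MonoidAlgebra k G) : (u * v).coeff 1 = (v * u).coeff 1 := by
  rw [coeff_mul_apply_left, coeff_mul_apply_right]
  simp [mul_comm]

theorem coeff_mul_comm_of_mem_center {z : MonoidAlgebra k G}
    (hz : z ∈ Set.center (MonoidAlgebra k G)) (a b : G) : z.coeff (a * b) = z.coeff (b * a) := by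
  have hcomm := congrArg (·.coeff (a * b * a)) (Semigroup.mem_center_iff.1 hz (single a 1))
  simpa [mul_assoc] using hcomm.symm

def canonicalTrace : MonoidAlgebra k G →ₗ[k] k where
  toFun u := u.coeff 1
  map_add' _ _ := rfl
  map_smul' _ _ := rfl

theorem canonicalTrace_apply (u : MonoidAlgebra k G) : canonicalTrace u = u.coeff 1 := rfl

theorem canonicalTrace_mul_comm (u v : MonoidAlgebra k G) :
    canonicalTrace (u * v) = canonicalTrace (v * u) :=
  coeff_one_mul_comm u v

theorem eq_zero_of_canonicalTrace_mul_eq_zero {u : MonoidAlgebra k G}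
    (hu : ∀ v, canonicalTrace (u * v) = 0) : u = 0 := by
  ext g
  simpa [canonicalTrace_apply] using hu (single g⁻¹ 1)

variable [Fintype G]

theorem coeff_mul_eq_sum (u v : MonoidAlgebra k G) (g : G) :
    (u * v).coeff g = ∑ a, u.coeff a * v.coeff (a⁻¹ * g) :=
  (coeff_mul_apply_left u v g).trans (Finsupp.sum_fintype _ _ fun _ => zero_mul _)

theorem sum_mul_coeff_mul (f : G → k) (u v : MonoidAlgebra k G) :
    ∑ g, f g * (u * v).coeff g = ∑ a, ∑ b, f (a * b) * (u.coeff a * v.coeff b) := by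
  simp only [coeff_mul_eq_sum, mul_sum]
  rw [sum_comm]
  refine sum_congr rfl fun a _ => ?_
  exact Fintype.sum_equiv (Equiv.mulLeft a⁻¹) _ _ fun g => by simp

def coeffPairing (f : G → k) : MonoidAlgebra k G →ₗ[k] k where
  toFun u := ∑ g, f g * u.coeff g
  map_add' u v := by simp [mul_add, sum_add_distrib]
  map_smul' c u := by simp [mul_sum, mul_left_comm]

theorem coeffPairing_mul_comm {f : G → k} (hf : ∀ a b, f (a * b) = f (b * a))
    (u v : MonoidAlgebra k G) : coeffPairing f (u * v) = coeffPairing f (v * u) := by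
  simp only [coeffPairing, LinearMap.coe_mk, AddHom.coe_mk, sum_mul_coeff_mul]
  rw [sum_comm]
  simp only [hf, mul_comm]

end CommSemiring

variable {k G : Type*} [CommRing k] [IsDomain k] [CharZero k] [Group G] [Fintype G]

theorem eq_zero_of_mem_center_of_coeffPairing_eq_zero {z : MonoidAlgebra k G} (hz : z ∈ Set.center (MonoidAlgebra k G))
    (h : ∀ f : G → k, (∀ a b, f (a * b) = f (b * a)) → coeffPairing f z = 0) : z = 0 := by
  classical
  ext g₀
  have hconj : ∀ g, IsConj g₀ g → z.coeff g = z.coeff g₀ := by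
    intro g hg
    obtain ⟨c, rfl⟩ := isConj_iff.1 hg
    rw [coeff_mul_comm_of_mem_center hz, inv_mul_cancel_left]
  have hclass := h (fun g => if IsConj g₀ g then 1 else 0) fun a b => by
    simp only [show IsConj g₀ (a * b) ↔ IsConj g₀ (b * a) from
      ⟨(·.trans (isConj_mul_comm a b)), (·.trans (isConj_mul_comm b a))⟩]
  have hcard : (#{g | IsConj g₀ g} : k) ≠ 0 :=
    Nat.cast_ne_zero.2 (card_ne_zero.2 ⟨g₀, mem_filter.2 ⟨mem_univ _, IsConj.refl g₀⟩⟩)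
  simp only [coeffPairing, LinearMap.coe_mk, AddHom.coe_mk, ite_mul, one_mul, zero_mul] at hclass
  rw [sum_ite, sum_congr rfl fun g hg => hconj g (mem_filter.1 hg).2, sum_const, sum_const_zero,
    add_zero, nsmul_eq_mul] at hclass
  rw [coeff_zero, Finsupp.zero_apply]
  exact (mul_eq_zero.1 hclass).resolve_left hcard

end MonoidAlgebra

namespace Matrix

section Ring

variable {n k R : Type*} [Fintype n] [CommRing k] [Ring R] [Algebra k R]

theorem map_trace_mul_comm {M : Type*} [AddCommMonoid M] (φ : R →+ M)
    (hφ : ∀ a b, φ (a * b) = φ (b * a)) (A B : Matrix n n R) :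
    φ (trace (A * B)) = φ (trace (B * A)) := by
  simp only [trace, diag, mul_apply, map_sum]
  rw [sum_comm]
  exact sum_congr rfl fun _ _ => sum_congr rfl fun _ _ => hφ _ _

theorem map_trace_eq_zero_of_mem_span_commutators {M : Type*} [AddCommGroup M] [Module k M]
    (φ : R →ₗ[k] M) (hφ : ∀ a b, φ (a * b) = φ (b * a)) {X : Matrix n n R}
    (hX : X ∈ Submodule.span k {X : Matrix n n R | ∃ A B, X = A * B - B * A}) :
    φ (trace X) = 0 := by
  refine Submodule.span_le (p := LinearMap.ker (φ ∘ₗ traceLinearMap n k R)) |>.2 ?_ hX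
  rintro _ ⟨A, B, rfl⟩
  simpa [trace_sub, sub_eq_zero] using map_trace_mul_comm φ.toAddMonoidHom hφ A B

variable [DecidableEq n]

def traceForm (τ : R →ₗ[k] k) : LinearMap.BilinForm k (Matrix n n R) :=
  (LinearMap.mul k (Matrix n n R)).compr₂ (τ ∘ₗ traceLinearMap n k R)

variable {τ : R →ₗ[k] k}

theorem traceForm_apply (X Y : Matrix n n R) : traceForm τ X Y = τ (trace (X * Y)) := rfl

theorem traceForm_comm (hτ : ∀ a b, τ (a * b) = τ (b * a)) (X Y : Matrix n n R) :
    traceForm τ X Y = traceForm τ Y X :=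
  map_trace_mul_comm τ.toAddMonoidHom hτ X Y

theorem traceForm_lie (hτ : ∀ a b, τ (a * b) = τ (b * a)) (X Y Z : Matrix n n R) :
    traceForm τ ⁅X, Y⁆ Z = traceForm τ X ⁅Y, Z⁆ := by
  have hcyc : traceForm τ (Y * X) Z = traceForm τ X (Z * Y) := by
    rw [traceForm_apply, traceForm_apply, mul_assoc, ← mul_assoc X]
    exact map_trace_mul_comm τ.toAddMonoidHom hτ Y (X * Z)
  rw [Ring.lie_def, Ring.lie_def, map_sub, LinearMap.sub_apply, map_sub, hcyc,
    traceForm_apply (X * Y), traceForm_apply X (Y * Z), mul_assoc]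

theorem eq_zero_of_traceForm_eq_zero (hτ : ∀ a, (∀ b, τ (a * b) = 0) → a = 0)
    {X : Matrix n n R} (hX : ∀ Y, traceForm τ X Y = 0) : X = 0 := by
  ext i j
  refine hτ _ fun b => ?_
  simpa [traceForm_apply, trace_mul_single] using hX (single j i b)

theorem mem_center_of_traceForm_commutator_eq_zero (hτ : ∀ a b, τ (a * b) = τ (b * a))
    (hτ' : ∀ a, (∀ b, τ (a * b) = 0) → a = 0) {X : Matrix n n R}
    (hX : ∀ A B, traceForm τ X (A * B - B * A) = 0) : X ∈ Set.center (Matrix n n R) := by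
  refine Semigroup.mem_center_iff.2 fun A => (sub_eq_zero.1 ?_).symm
  refine eq_zero_of_traceForm_eq_zero hτ' fun B => ?_
  rw [← Ring.lie_def, traceForm_lie hτ]
  exact hX A B

end Ring

section GroupAlgebra

open MonoidAlgebra

variable {n k G : Type*} [Fintype n] [DecidableEq n] [CommRing k] [Group G]

theorem traceForm_canonicalTrace_single_single [DecidableEq G] (a b c d : n) (g₁ g₂ : G) :
    traceForm canonicalTrace (single a b (MonoidAlgebra.single g₁ (1 : k)))
        (single c d (MonoidAlgebra.single g₂ 1)) =
      trace (single a b (1 : k) * single c d 1) * if g₁ = g₂⁻¹ then 1 else 0 := by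
  simp only [traceForm_apply, canonicalTrace_apply, trace_mul_single, single_apply]
  split_ifs <;> simp_all [eq_inv_iff_mul_eq_one]

theorem eq_zero_of_mem_span_commutators_of_traceForm_eq_zero [IsDomain k] [CharZero k]
    [Fintype G] {X : Matrix n n (MonoidAlgebra k G)}
    (hX : X ∈ Submodule.span k {X : Matrix n n (MonoidAlgebra k G) | ∃ A B, X = A * B - B * A})
    (hXY : ∀ Y ∈ Submodule.span k
        {X : Matrix n n (MonoidAlgebra k G) | ∃ A B, X = A * B - B * A},
      traceForm canonicalTrace X Y = 0) :
    X = 0 := by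
  have hcenter := mem_center_of_traceForm_commutator_eq_zero canonicalTrace_mul_comm
    (fun _ => eq_zero_of_canonicalTrace_mul_eq_zero)
    fun A B => hXY _ (Submodule.subset_span ⟨A, B, rfl⟩)
  rw [center_eq_scalar_image] at hcenter
  obtain ⟨z, hz, rfl⟩ := hcenter
  cases isEmpty_or_nonempty n
  · exact Subsingleton.elim _ _
  suffices z = 0 by rw [this, map_zero]
  refine eq_zero_of_mem_center_of_coeffPairing_eq_zero hz fun f hf => ?_
  have htrace := map_trace_eq_zero_of_mem_span_commutators _ (coeffPairing_mul_comm hf) hX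
  rw [scalar_apply, trace_diagonal, sum_const, card_univ, map_nsmul, smul_eq_zero] at htrace
  exact htrace.resolve_left Fintype.card_ne_zero

end GroupAlgebra

end Matrix

theorem stmt_3_general (G : Type) [Group G] [Finite G] [DecidableEq G] (n : ℕ)
    (κ : Matrix (Fin n) (Fin n) (MonoidAlgebra ℂ G) →
          Matrix (Fin n) (Fin n) (MonoidAlgebra ℂ G) → ℂ)
    (hκ : ∀ X Y, κ X Y = (Matrix.trace (X * Y)).coeff (1 : G)) :
    (∀ X Y, κ X Y = κ Y X)
    ∧ (∀ X₁ X₂ Y, κ (X₁ + X₂) Y = κ X₁ Y + κ X₂ Y)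
    ∧ (∀ (c : ℂ) X Y, κ (c • X) Y = c * κ X Y)
    ∧ (∀ X Y₁ Y₂, κ X (Y₁ + Y₂) = κ X Y₁ + κ X Y₂)
    ∧ (∀ (c : ℂ) X Y, κ X (c • Y) = c * κ X Y)
    ∧ (∀ X Y Z, κ ⁅X, Y⁆ Z = κ X ⁅Y, Z⁆)
    ∧ (∀ X ∈ Submodule.span ℂ
          {X : Matrix (Fin n) (Fin n) (MonoidAlgebra ℂ G) | ∃ A B, X = A * B - B * A},
        (∀ Y ∈ Submodule.span ℂ
            {X : Matrix (Fin n) (Fin n) (MonoidAlgebra ℂ G) | ∃ A B, X = A * B - B * A},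
          κ X Y = 0) → X = 0)
    ∧ (∀ (a b c d : Fin n) (g₁ g₂ : G),
        κ (Matrix.single a b (MonoidAlgebra.single g₁ (1 : ℂ)))
          (Matrix.single c d (MonoidAlgebra.single g₂ (1 : ℂ)))
        = Matrix.trace
            (Matrix.single a b (1 : ℂ) * Matrix.single c d (1 : ℂ))
          * (if g₁ = g₂⁻¹ then 1 else 0)) := by
  cases nonempty_fintype G
  obtain rfl : κ = fun X Y => traceForm (MonoidAlgebra.canonicalTrace (k := ℂ) (G := G)) X Y :=
    funext₂ hκ
  exact ⟨traceForm_comm MonoidAlgebra.canonicalTrace_mul_comm,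
    fun X₁ X₂ Y => LinearMap.map_add₂ _ X₁ X₂ Y,
    fun c X Y => LinearMap.map_smul₂ _ c X Y,
    fun X Y₁ Y₂ => map_add _ Y₁ Y₂,
    fun c X Y => map_smul _ c Y,
    traceForm_lie MonoidAlgebra.canonicalTrace_mul_comm,
    fun _ hX hXY => eq_zero_of_mem_span_commutators_of_traceForm_eq_zero hX hXY,
    traceForm_canonicalTrace_single_single⟩

theorem stmt_3 (G : Type) [Group G] [Finite G] [DecidableEq G] (n : ℕ) (hn : 2 ≤ n)
    (κ : Matrix (Fin n) (Fin n) (MonoidAlgebra ℂ G) →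
          Matrix (Fin n) (Fin n) (MonoidAlgebra ℂ G) → ℂ)
    (hκ : ∀ X Y, κ X Y = (Matrix.trace (X * Y)).coeff (1 : G)) :
    (∀ X Y, κ X Y = κ Y X)
    ∧ (∀ X₁ X₂ Y, κ (X₁ + X₂) Y = κ X₁ Y + κ X₂ Y)
    ∧ (∀ (c : ℂ) X Y, κ (c • X) Y = c * κ X Y)
    ∧ (∀ X Y₁ Y₂, κ X (Y₁ + Y₂) = κ X Y₁ + κ X Y₂)
    ∧ (∀ (c : ℂ) X Y, κ X (c • Y) = c * κ X Y)
    ∧ (∀ X Y Z, κ ⁅X, Y⁆ Z = κ X ⁅Y, Z⁆)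
    ∧ (∀ X ∈ Submodule.span ℂ
          {X : Matrix (Fin n) (Fin n) (MonoidAlgebra ℂ G) | ∃ A B, X = A * B - B * A},
        (∀ Y ∈ Submodule.span ℂ
            {X : Matrix (Fin n) (Fin n) (MonoidAlgebra ℂ G) | ∃ A B, X = A * B - B * A},
          κ X Y = 0) → X = 0)
    ∧ (∀ (a b c d : Fin n) (g₁ g₂ : G),
        κ (Matrix.single a b (MonoidAlgebra.single g₁ (1 : ℂ)))
          (Matrix.single c d (MonoidAlgebra.single g₂ (1 : ℂ)))
        = Matrix.trace
            (Matrix.single a b (1 : ℂ) * Matrix.single c d (1 : ℂ))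
          * (if g₁ = g₂⁻¹ then 1 else 0)) :=
  stmt_3_general G n κ hκ
end

section
/- Let A = ℂ[u^{±1}]⋊Γ. Then the ℂ-linear span of the commutators {xy − yx : x, y ∈ A} equals the ℂ-linear span of the set {u^j ξ^i : j ∈ ℤ, 1 ≤ i ≤ d−1} ∪ {u^j : j ∈ ℤ, d ∤ j}. -/
/-!
STATEMENT 4: In `A = ℂ[u^{±1}] ⋊ Γ` (with `Γ = ℤ/dℤ`, `ξ` a generator acting by
`ξ(u) = ζu` for a primitive `d`-th root of unity `ζ`), the ℂ-linear span of the
commutators `{xy − yx}` equals the ℂ-linear span of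
`{u^j ξ^i : j ∈ ℤ, 1 ≤ i ≤ d−1} ∪ {u^j : j ∈ ℤ, d ∤ j}`.

The skew group algebra is formalized abstractly: `A` is any associative unital
ℂ-algebra with a ℂ-basis `b j i` (representing `u^j ξ^i`, `j ∈ ℤ`, `i ∈ ℤ/dℤ`)
satisfying `b 0 0 = 1` and the multiplication rule
`(u^{j₁}ξ^{i₁})·(u^{j₂}ξ^{i₂}) = ζ^{i₁ j₂} u^{j₁+j₂} ξ^{i₁+i₂}`.
-/

/-- Data exhibiting `A` as the skew group algebra `ℂ[u^{±1}] ⋊ (ℤ/dℤ)`,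
where `b j i` represents the basis element `u^j ξ^i`. -/
structure SkewLaurentAlgebra (d : ℕ) (ζ : ℂ) (A : Type) [Ring A] [Algebra ℂ A] where
  b : ℤ → ZMod d → A
  basis : Module.Basis (ℤ × ZMod d) ℂ A
  basis_eq : ∀ (j : ℤ) (i : ZMod d), basis (j, i) = b j i
  b_one : b 0 0 = 1
  b_mul : ∀ (j₁ j₂ : ℤ) (i₁ i₂ : ZMod d),
    b j₁ i₁ * b j₂ i₂ = (ζ ^ ((i₁.val : ℤ) * j₂)) • b (j₁ + j₂) (i₁ + i₂)

/-!
On basis elements, `[u^{j₁}ξ^{i₁}, u^{j₂}ξ^{i₂}] = (ζ^{i₁j₂} - ζ^{i₂j₁}) u^{j₁+j₂}ξ^{i₁+i₂}`, and the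
coefficient vanishes when `i₁ + i₂ = 0` and `d ∣ j₁ + j₂`; by bilinearity this gives one inclusion.
Conversely `[u^{j-1}ξ^i, u]` is a nonzero multiple of `u^jξ^i` for `i ≠ 0`, and `[ξ, u^jξ^{-1}]` is a
nonzero multiple of `u^j` for `d ∤ j`, since `ζ` is a primitive `d`-th root of unity.
-/

theorem Submodule.span_commutators_le_of_basis {R A ι : Type*} [CommRing R] [Ring A] [Algebra R A]
    (b : Module.Basis ι R A) {M : Submodule R A} (h : ∀ i j, b i * b j - b j * b i ∈ M) :
    Submodule.span R {x : A | ∃ y z : A, x = y * z - z * y} ≤ M := by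
  let f : A →ₗ[R] A →ₗ[R] A := LinearMap.mul R A - (LinearMap.mul R A).flip
  have hf : Submodule.map₂ f ⊤ ⊤ ≤ M := by
    rw [← b.span_eq, Submodule.map₂_span_span, Submodule.span_le]
    rintro _ ⟨_, ⟨i, rfl⟩, _, ⟨j, rfl⟩, rfl⟩
    exact h i j
  rw [Submodule.span_le]
  rintro _ ⟨y, z, rfl⟩
  exact hf (Submodule.apply_mem_map₂ f Submodule.mem_top Submodule.mem_top)

theorem IsPrimitiveRoot.zpow_val_mul_eq_zpow_val_mul_iff {K : Type*} [Field K] {d : ℕ} [NeZero d]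
    {ζ : K} (hζ : IsPrimitiveRoot ζ d) (i₁ i₂ : ZMod d) (j₁ j₂ : ℤ) :
    ζ ^ ((i₁.val : ℤ) * j₁) = ζ ^ ((i₂.val : ℤ) * j₂) ↔ i₁ * j₁ = i₂ * j₂ := by
  have hζ₀ : ζ ≠ 0 := hζ.ne_zero (NeZero.ne d)
  rw [← div_eq_one_iff_eq (zpow_ne_zero _ hζ₀), ← zpow_sub₀ hζ₀, hζ.zpow_eq_one_iff_dvd,
    ← ZMod.intCast_eq_intCast_iff_dvd_sub, eq_comm]
  simp [ZMod.natCast_val]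

namespace SkewLaurentAlgebra

variable {d : ℕ} {ζ : ℂ} {A : Type} [Ring A] [Algebra ℂ A] (S : SkewLaurentAlgebra d ζ A)

theorem b_commutator (j₁ j₂ : ℤ) (i₁ i₂ : ZMod d) :
    S.b j₁ i₁ * S.b j₂ i₂ - S.b j₂ i₂ * S.b j₁ i₁
      = (ζ ^ ((i₁.val : ℤ) * j₂) - ζ ^ ((i₂.val : ℤ) * j₁)) • S.b (j₁ + j₂) (i₁ + i₂) := by
  rw [S.b_mul, S.b_mul, add_comm j₂, add_comm i₂, sub_smul]

variable {S}

theorem b_commutator_mem_span [NeZero d] (hζ : IsPrimitiveRoot ζ d) (j₁ j₂ : ℤ) (i₁ i₂ : ZMod d) :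
    S.b j₁ i₁ * S.b j₂ i₂ - S.b j₂ i₂ * S.b j₁ i₁ ∈ Submodule.span ℂ
      ({x : A | ∃ (j : ℤ) (i : ZMod d), i ≠ 0 ∧ x = S.b j i}
        ∪ {x : A | ∃ j : ℤ, ¬ ((d : ℤ) ∣ j) ∧ x = S.b j 0}) := by
  rw [S.b_commutator]
  by_cases hi : i₁ + i₂ = 0
  · by_cases hj : (d : ℤ) ∣ j₁ + j₂
    · have hj' : (j₁ : ZMod d) + j₂ = 0 := by
        exact_mod_cast (ZMod.intCast_zmod_eq_zero_iff_dvd _ d).mpr hj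
      have hcoeff : ζ ^ ((i₁.val : ℤ) * j₂) = ζ ^ ((i₂.val : ℤ) * j₁) :=
        (hζ.zpow_val_mul_eq_zpow_val_mul_iff _ _ _ _).mpr
          (by linear_combination (i₁ : ZMod d) * hj' - (j₁ : ZMod d) * hi)
      rw [hcoeff, sub_self, zero_smul]
      exact Submodule.zero_mem _
    · exact Submodule.smul_mem _ _ (Submodule.subset_span (.inr ⟨j₁ + j₂, hj, by rw [hi]⟩))
  · exact Submodule.smul_mem _ _ (Submodule.subset_span (.inl ⟨j₁ + j₂, i₁ + i₂, hi, rfl⟩))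

theorem b_mem_span_commutators_of_ne_zero [NeZero d] (hζ : IsPrimitiveRoot ζ d) (j : ℤ) {i : ZMod d}
    (hi : i ≠ 0) : S.b j i ∈ Submodule.span ℂ {x : A | ∃ y z : A, x = y * z - z * y} := by
  have hc : ζ ^ ((i.val : ℤ) * 1) - ζ ^ (((0 : ZMod d).val : ℤ) * (j - 1)) ≠ 0 := by
    rw [sub_ne_zero, Ne, hζ.zpow_val_mul_eq_zpow_val_mul_iff]
    simpa using hi
  rw [← Submodule.smul_mem_iff _ hc]
  refine Submodule.subset_span ⟨S.b (j - 1) i, S.b 1 0, ?_⟩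
  rw [S.b_commutator, sub_add_cancel, add_zero]

theorem b_zero_mem_span_commutators_of_not_dvd [NeZero d] (hζ : IsPrimitiveRoot ζ d) {j : ℤ}
    (hj : ¬ (d : ℤ) ∣ j) : S.b j 0 ∈ Submodule.span ℂ {x : A | ∃ y z : A, x = y * z - z * y} := by
  have hc : ζ ^ (((1 : ZMod d).val : ℤ) * j) - ζ ^ (((-1 : ZMod d).val : ℤ) * 0) ≠ 0 := by
    rw [sub_ne_zero, Ne, hζ.zpow_val_mul_eq_zpow_val_mul_iff]
    simpa [ZMod.intCast_zmod_eq_zero_iff_dvd] using hj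
  rw [← Submodule.smul_mem_iff _ hc]
  refine Submodule.subset_span ⟨S.b 0 1, S.b j (-1), ?_⟩
  rw [S.b_commutator, zero_add, add_neg_cancel]

end SkewLaurentAlgebra

theorem stmt_4 (d : ℕ) (hd : 0 < d) (ζ : ℂ) (hζ : IsPrimitiveRoot ζ d)
    (A : Type) [Ring A] [Algebra ℂ A] (S : SkewLaurentAlgebra d ζ A) :
    Submodule.span ℂ {x : A | ∃ y z : A, x = y * z - z * y}
      = Submodule.span ℂ
          ({x : A | ∃ (j : ℤ) (i : ZMod d), i ≠ 0 ∧ x = S.b j i}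
            ∪ {x : A | ∃ j : ℤ, ¬ ((d : ℤ) ∣ j) ∧ x = S.b j 0}) := by
  have : NeZero d := ⟨hd.ne'⟩
  apply le_antisymm
  · refine Submodule.span_commutators_le_of_basis S.basis fun p q => ?_
    rw [S.basis_eq, S.basis_eq]
    exact SkewLaurentAlgebra.b_commutator_mem_span hζ _ _ _ _
  · rw [Submodule.span_le]
    rintro _ (⟨j, i, hi, rfl⟩ | ⟨j, hj, rfl⟩)
    · exact SkewLaurentAlgebra.b_mem_span_commutators_of_ne_zero hζ j hi
    · exact SkewLaurentAlgebra.b_zero_mem_span_commutators_of_not_dvd hζ hj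
end

section
/- For every n ≥ 1 and d ≥ 1, the Lie algebras 𝔰𝔩_n(ℂ[u^{±1}]⋊Γ) and 𝔰𝔩_{nd}(ℂ[t^{±1}]) are isomorphic as Lie algebras over ℂ, where ℂ[t^{±1}] is the Laurent polynomial ring in one variable. -/
attribute [local instance 100] LieRing.ofAssociativeRing

/-!
Let `u` act on `ℂ[u, u⁻¹]`, a free module over `ℂ[t, t⁻¹]` (`t = u ^ d`) with basis
`1, u, …, u ^ (d - 1)`, by multiplication, and `ξ` by `u ^ k ↦ ζ ^ k u ^ k`. The resulting shift and
clock matrices satisfy `ξ u = ζ u ξ`, so they define an algebra map `A → M_d(ℂ[t, t⁻¹])`. It is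
bijective: the Fourier idempotents `e_c = d⁻¹ ∑ₗ ζ ^ (-c l) ξ ^ l` go to the diagonal matrix units,
so `u ^ (a - c + d m) e_c` goes to `E_{ac} t ^ m`, and these elements span `A`. Hence
`M_n(A) ≅ M_n(M_d(ℂ[t, t⁻¹])) ≅ M_{nd}(ℂ[t, t⁻¹])` as algebras, so as Lie algebras, and a Lie
algebra isomorphism restricts to the derived subalgebras.
-/

open Matrix LaurentPolynomial

lemma Int.add_emod_ediv_add_ediv (a x : ℤ) {n : ℤ} (hn : n ≠ 0) :
    (a + x % n) / n + x / n = (a + x) / n := by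
  rw [← Int.add_mul_ediv_left _ _ hn, add_assoc, Int.emod_add_mul_ediv]

lemma AddChar.sum_mul_mul_neg {R K : Type*} [CommRing R] [Fintype R] [DecidableEq R] [CommRing K]
    [IsDomain K] {ψ : AddChar R K} (hψ : ψ.IsPrimitive) (a b : R) :
    ∑ x, ψ (x * a) * ψ (-(x * b)) = if a = b then (Fintype.card R : K) else 0 := by
  simp_rw [← AddChar.map_add_eq_mul, ← mul_neg, ← mul_add, ← sub_eq_add_neg,
    AddChar.sum_mulShift _ hψ, sub_eq_zero, Nat.cast_ite, Nat.cast_zero]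

lemma AddChar.zmodChar_intCast {K : Type*} [Field K] {d : ℕ} [NeZero d] {ζ : K} (hζ : ζ ^ d = 1)
    (z : ℤ) : AddChar.zmodChar d hζ z = ζ ^ z := by
  have hζ0 : ζ ≠ 0 := by rintro rfl; simp [NeZero.ne d] at hζ
  rw [AddChar.zmodChar_apply, ← zpow_natCast, ZMod.val_intCast]
  conv_rhs => rw [← Int.emod_add_mul_ediv z d, zpow_add₀ hζ0, _root_.zpow_mul, zpow_natCast, hζ,
    _root_.one_zpow, mul_one]

lemma LinearMap.map_mul_of_basis {R A B ι : Type*} [CommSemiring R] [Semiring A] [Algebra R A]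
    [Semiring B] [Algebra R B] (b : Module.Basis ι R A) (f : A →ₗ[R] B)
    (h : ∀ i j, f (b i * b j) = f (b i) * f (b j)) (x y : A) : f (x * y) = f x * f y :=
  (LinearMap.map_mul_iff f).mpr (LinearMap.ext_basis b b h) x y

def LieEquiv.derivedAlgebra {R L L' : Type*} [CommRing R] [LieRing L] [LieAlgebra R L] [LieRing L']
    [LieAlgebra R L'] (e : L ≃ₗ⁅R⁆ L') :
    (⁅(⊤ : LieIdeal R L), ⊤⁆ : LieIdeal R L) ≃ₗ⁅R⁆ (⁅(⊤ : LieIdeal R L'), ⊤⁆ : LieIdeal R L') :=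
  LieEquiv.ofSubalgebras (⁅(⊤ : LieIdeal R L), ⊤⁆ : LieIdeal R L).toLieSubalgebra
    (⁅(⊤ : LieIdeal R L'), ⊤⁆ : LieIdeal R L').toLieSubalgebra e <|
    LieSubalgebra.toSubmodule_injective <|
    (LieIdeal.coe_map_of_surjective e.surjective).symm.trans
      (congrArg LieSubmodule.toSubmodule (LieIdeal.derivedSeries_map_eq 1 e.surjective))

lemma LaurentPolynomial.basis_matrix_apply {K ι : Type*} [CommRing K] [Fintype ι] [DecidableEq ι]
    (a c : ι) (k : ℤ) : (AddMonoidAlgebra.basis ℤ K).matrix ι ι (a, c, k) = single a c (T k) := by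
  rw [Module.Basis.matrix_apply, AddMonoidAlgebra.basis_apply]
  rfl

section ClockAndShift

variable (K : Type*) [CommRing K] (d : ℕ)

/-- Multiplication by `u ^ j` on `K[u, u⁻¹]`, a free `K[T;T⁻¹]`-module for `T = u ^ d` with basis
`u ^ k.val`, `k : ZMod d`. -/
noncomputable def shiftMatrix (j : ℤ) : Matrix (ZMod d) (ZMod d) K[T;T⁻¹] :=
  of fun r k => if r = j + k then T ((j + k.val) / d) else 0

variable {K d}

noncomputable def clockMatrix (ψ : AddChar (ZMod d) K) (i : ZMod d) :
    Matrix (ZMod d) (ZMod d) K[T;T⁻¹] :=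
  diagonal fun k => C (ψ (i * k))

lemma shiftMatrix_apply (j : ℤ) (r k : ZMod d) :
    shiftMatrix K d j r k = if r = j + k then T ((j + k.val) / d) else 0 := rfl

@[simp]
lemma clockMatrix_zero (ψ : AddChar (ZMod d) K) : clockMatrix ψ 0 = 1 := by
  simp [clockMatrix]

variable [NeZero d]

@[simp]
lemma shiftMatrix_zero : shiftMatrix K d 0 = 1 := by
  refine Matrix.ext fun r k => ?_
  simp only [shiftMatrix_apply, Int.cast_zero, zero_add, one_apply,
    Int.ediv_eq_zero_of_lt (Int.natCast_nonneg _) (Int.ofNat_lt.mpr (ZMod.val_lt k)), T_zero]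

lemma shiftMatrix_mul_shiftMatrix (j₁ j₂ : ℤ) :
    shiftMatrix K d j₁ * shiftMatrix K d j₂ = shiftMatrix K d (j₁ + j₂) := by
  refine Matrix.ext fun r k => ?_
  have hval : (((j₂ : ZMod d) + k).val : ℤ) = (j₂ + k.val) % d := by
    rw [← ZMod.val_intCast]; simp
  simp only [mul_apply, shiftMatrix_apply, mul_ite, mul_zero, ite_mul, zero_mul, ← T_add]
  rw [Finset.sum_ite_eq', if_pos (Finset.mem_univ _), hval,
    Int.add_emod_ediv_add_ediv _ _ (by exact_mod_cast NeZero.ne d), Int.cast_add, add_assoc,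
    add_assoc]

lemma clockMatrix_mul_clockMatrix (ψ : AddChar (ZMod d) K) (i₁ i₂ : ZMod d) :
    clockMatrix ψ i₁ * clockMatrix ψ i₂ = clockMatrix ψ (i₁ + i₂) := by
  simp only [clockMatrix, diagonal_mul_diagonal, ← map_mul, ← AddChar.map_add_eq_mul, add_mul]

lemma clockMatrix_mul_shiftMatrix (ψ : AddChar (ZMod d) K) (i : ZMod d) (j : ℤ) :
    clockMatrix ψ i * shiftMatrix K d j = ψ (i * j) • (shiftMatrix K d j * clockMatrix ψ i) := by
  refine Matrix.ext fun r k => ?_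
  rw [Matrix.smul_apply]
  simp only [clockMatrix, diagonal_mul, mul_diagonal, shiftMatrix_apply]
  split_ifs with h
  · rw [h, mul_add, AddChar.map_add_eq_mul, map_mul, smul_eq_C_mul]
    ring
  · simp

lemma shiftMatrix_mul_clockMatrix_mul (ψ : AddChar (ZMod d) K) (j₁ j₂ : ℤ) (i₁ i₂ : ZMod d) :
    shiftMatrix K d j₁ * clockMatrix ψ i₁ * (shiftMatrix K d j₂ * clockMatrix ψ i₂) =
      ψ (i₁ * j₂) • (shiftMatrix K d (j₁ + j₂) * clockMatrix ψ (i₁ + i₂)) := by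
  rw [mul_assoc, ← mul_assoc (clockMatrix ψ i₁), clockMatrix_mul_shiftMatrix, smul_mul_assoc,
    mul_smul_comm, mul_assoc, clockMatrix_mul_clockMatrix, ← mul_assoc,
    shiftMatrix_mul_shiftMatrix]

lemma shiftMatrix_mul_single (a c : ZMod d) (m : ℤ) :
    shiftMatrix K d (a.val + d * m - c.val) * single c c 1 = single a c (T m) := by
  refine Matrix.ext fun r k => ?_
  rcases eq_or_ne k c with rfl | hk
  · have hrow : ((a.val + d * m - k.val : ℤ) : ZMod d) + k = a := by simp
    have hexp : (a.val + d * m - k.val + k.val) / d = m := by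
      rw [sub_add_cancel, Int.add_mul_ediv_left _ _ (by exact_mod_cast NeZero.ne d),
        Int.ediv_eq_zero_of_lt (Int.natCast_nonneg _) (Int.ofNat_lt.mpr (ZMod.val_lt a)), zero_add]
    rw [mul_single_apply_same, mul_one, shiftMatrix_apply, hrow, hexp, single_apply]
    simp [eq_comm]
  · simp [mul_single_apply_of_ne (hbj := hk), hk.symm]

lemma sum_smul_clockMatrix [IsDomain K] {ψ : AddChar (ZMod d) K} (hψ : ψ.IsPrimitive)
    (c : ZMod d) : ∑ l, ψ (-(l * c)) • clockMatrix ψ l = (d : K) • single c c 1 := by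
  have hsum (k : ZMod d) : ∑ l, ψ (-(l * c)) * ψ (l * k) = if k = c then (d : K) else 0 := by
    simp_rw [mul_comm (ψ (-_))]
    rw [AddChar.sum_mul_mul_neg hψ, ZMod.card]
  refine Matrix.ext fun r k => ?_
  rw [Matrix.sum_apply]
  simp only [Matrix.smul_apply, clockMatrix, diagonal_apply, single_apply]
  rcases eq_or_ne r k with rfl | h
  · simp only [if_true, and_self, smul_eq_C_mul, ← map_mul, ← map_sum, hsum, eq_comm (a := r)]
    split_ifs <;> simp
  · rw [if_neg fun hc => h (hc.1.symm.trans hc.2), smul_zero]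
    simp [h]

end ClockAndShift

namespace SkewLaurentAlgebra

variable {d : ℕ} {ζ : ℂ} {A : Type} [Ring A] [Algebra ℂ A] (S : SkewLaurentAlgebra d ζ A)

lemma b_mul_b_zero (j : ℤ) (i : ZMod d) : S.b j 0 * S.b 0 i = S.b j i := by
  simp [S.b_mul]

variable [NeZero d]

noncomputable def toMatrixₗ (hζ : ζ ^ d = 1) : A →ₗ[ℂ] Matrix (ZMod d) (ZMod d) ℂ[T;T⁻¹] :=
  S.basis.constr ℂ fun p => shiftMatrix ℂ d p.1 * clockMatrix (AddChar.zmodChar d hζ) p.2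

lemma toMatrixₗ_b (hζ : ζ ^ d = 1) (j : ℤ) (i : ZMod d) :
    S.toMatrixₗ hζ (S.b j i) = shiftMatrix ℂ d j * clockMatrix (AddChar.zmodChar d hζ) i := by
  rw [← S.basis_eq]
  exact S.basis.constr_basis ℂ _ (j, i)

noncomputable def toMatrix (hζ : ζ ^ d = 1) : A →ₐ[ℂ] Matrix (ZMod d) (ZMod d) ℂ[T;T⁻¹] :=
  AlgHom.ofLinearMap (S.toMatrixₗ hζ) (by simp [← S.b_one, toMatrixₗ_b]) <|
    LinearMap.map_mul_of_basis S.basis _ fun ⟨j₁, i₁⟩ ⟨j₂, i₂⟩ => by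
      simp only [S.basis_eq, S.b_mul, map_smul, toMatrixₗ_b, shiftMatrix_mul_clockMatrix_mul]
      rw [← AddChar.zmodChar_intCast hζ]
      simp

lemma toMatrix_b (hζ : ζ ^ d = 1) (j : ℤ) (i : ZMod d) :
    S.toMatrix hζ (S.b j i) = shiftMatrix ℂ d j * clockMatrix (AddChar.zmodChar d hζ) i :=
  S.toMatrixₗ_b hζ j i

noncomputable def idempotent (hζ : ζ ^ d = 1) (c : ZMod d) : A :=
  (d : ℂ)⁻¹ • ∑ l, AddChar.zmodChar d hζ (-(l * c)) • S.b 0 l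

lemma toMatrix_idempotent (hζ : IsPrimitiveRoot ζ d) (c : ZMod d) :
    S.toMatrix hζ.pow_eq_one (S.idempotent hζ.pow_eq_one c) = single c c 1 := by
  have hd : (d : ℂ) ≠ 0 := by exact_mod_cast NeZero.ne d
  simp only [idempotent, map_smul, map_sum, toMatrix_b, shiftMatrix_zero, one_mul,
    sum_smul_clockMatrix (AddChar.zmodChar_primitive_of_primitive_root d hζ), smul_smul,
    inv_mul_cancel₀ hd, one_smul]

lemma sum_smul_idempotent (hζ : IsPrimitiveRoot ζ d) (i : ZMod d) :
    ∑ k, AddChar.zmodChar d hζ.pow_eq_one (k * i) • S.idempotent hζ.pow_eq_one k = S.b 0 i := by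
  have hd : (d : ℂ) ≠ 0 := by exact_mod_cast NeZero.ne d
  calc _ = (d : ℂ)⁻¹ • ∑ l, (∑ k, AddChar.zmodChar d hζ.pow_eq_one (k * i) *
          AddChar.zmodChar d hζ.pow_eq_one (-(k * l))) • S.b 0 l := by
        simp only [idempotent, Finset.smul_sum, Finset.sum_smul, smul_smul]
        rw [Finset.sum_comm]
        refine Finset.sum_congr rfl fun l _ => Finset.sum_congr rfl fun k _ => ?_
        rw [mul_comm l k, mul_left_comm]
    _ = S.b 0 i := by
        simp [AddChar.sum_mul_mul_neg (AddChar.zmodChar_primitive_of_primitive_root d hζ), hd]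

noncomputable def ofMatrix (hζ : ζ ^ d = 1) : Matrix (ZMod d) (ZMod d) ℂ[T;T⁻¹] →ₗ[ℂ] A :=
  ((AddMonoidAlgebra.basis ℤ ℂ).matrix (ZMod d) (ZMod d)).constr ℂ fun p =>
    S.b (p.1.val + d * p.2.2 - p.2.1.val) 0 * S.idempotent hζ p.2.1

lemma ofMatrix_single (hζ : ζ ^ d = 1) (a c : ZMod d) (m : ℤ) :
    S.ofMatrix hζ (single a c (T m)) = S.b (a.val + d * m - c.val) 0 * S.idempotent hζ c := by
  rw [← basis_matrix_apply]
  exact Module.Basis.constr_basis _ ℂ _ (a, c, m)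

lemma toMatrix_ofMatrix (hζ : IsPrimitiveRoot ζ d) (X : Matrix (ZMod d) (ZMod d) ℂ[T;T⁻¹]) :
    S.toMatrix hζ.pow_eq_one (S.ofMatrix hζ.pow_eq_one X) = X := by
  refine LinearMap.congr_fun (((AddMonoidAlgebra.basis ℤ ℂ).matrix (ZMod d) (ZMod d)).ext
    (f₁ := (S.toMatrix hζ.pow_eq_one).toLinearMap ∘ₗ S.ofMatrix hζ.pow_eq_one) (f₂ := .id)
    fun ⟨a, c, m⟩ => ?_) X
  rw [basis_matrix_apply, LinearMap.comp_apply, AlgHom.toLinearMap_apply, LinearMap.id_apply,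
    ofMatrix_single, map_mul, toMatrix_b, clockMatrix_zero, mul_one, S.toMatrix_idempotent hζ,
    shiftMatrix_mul_single]

lemma ofMatrix_surjective (hζ : IsPrimitiveRoot ζ d) :
    Function.Surjective (S.ofMatrix hζ.pow_eq_one) := by
  rw [← LinearMap.range_eq_top, eq_top_iff, ← S.basis.span_eq, Submodule.span_le]
  rintro _ ⟨⟨j, i⟩, rfl⟩
  have hcol (k : ZMod d) : S.b j 0 * S.idempotent hζ.pow_eq_one k ∈
      LinearMap.range (S.ofMatrix hζ.pow_eq_one) := by
    have h := S.ofMatrix_single hζ.pow_eq_one ((j + k.val : ℤ) : ZMod d) k ((j + k.val) / d)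
    rw [ZMod.val_intCast, Int.emod_add_mul_ediv, add_sub_cancel_right] at h
    exact ⟨_, h⟩
  rw [S.basis_eq, ← b_mul_b_zero, ← S.sum_smul_idempotent hζ, Finset.mul_sum]
  exact Submodule.sum_mem _ fun k _ => by
    rw [mul_smul_comm]
    exact Submodule.smul_mem _ _ (hcol k)

lemma toMatrix_bijective (hζ : IsPrimitiveRoot ζ d) :
    Function.Bijective (S.toMatrix hζ.pow_eq_one) :=
  have h : Function.LeftInverse (S.toMatrix hζ.pow_eq_one) (S.ofMatrix hζ.pow_eq_one) :=
    S.toMatrix_ofMatrix hζ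
  ⟨(h.rightInverse_of_surjective (S.ofMatrix_surjective hζ)).injective, h.surjective⟩

noncomputable def algEquivMatrix (hζ : IsPrimitiveRoot ζ d) :
    A ≃ₐ[ℂ] Matrix (Fin d) (Fin d) ℂ[T;T⁻¹] :=
  (AlgEquiv.ofBijective (S.toMatrix hζ.pow_eq_one) (S.toMatrix_bijective hζ)).trans
    (reindexAlgEquiv ℂ _ (ZMod.finEquiv d).symm.toEquiv)

end SkewLaurentAlgebra

theorem stmt_8_general (d : ℕ) (hd : 0 < d) (ζ : ℂ) (hζ : IsPrimitiveRoot ζ d)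
    (A : Type) [Ring A] [Algebra ℂ A] (S : SkewLaurentAlgebra d ζ A)
    (n : ℕ) :
    Nonempty
      ((⁅(⊤ : LieIdeal ℂ (Matrix (Fin n) (Fin n) A)),
          (⊤ : LieIdeal ℂ (Matrix (Fin n) (Fin n) A))⁆ :
          LieIdeal ℂ (Matrix (Fin n) (Fin n) A))
        ≃ₗ⁅ℂ⁆
        (⁅(⊤ : LieIdeal ℂ (Matrix (Fin (n * d)) (Fin (n * d)) (LaurentPolynomial ℂ))),
          (⊤ : LieIdeal ℂ (Matrix (Fin (n * d)) (Fin (n * d)) (LaurentPolynomial ℂ)))⁆ :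
          LieIdeal ℂ (Matrix (Fin (n * d)) (Fin (n * d)) (LaurentPolynomial ℂ)))) := by
  have : NeZero d := ⟨hd.ne'⟩
  let e : Matrix (Fin n) (Fin n) A ≃ₐ[ℂ] Matrix (Fin (n * d)) (Fin (n * d)) ℂ[T;T⁻¹] :=
    ((S.algEquivMatrix hζ).mapMatrix.trans (compAlgEquiv (Fin n) (Fin d) ℂ[T;T⁻¹] ℂ)).trans
      (reindexAlgEquiv ℂ ℂ[T;T⁻¹] finProdFinEquiv)
  exact ⟨e.toLieEquiv.derivedAlgebra⟩

theorem stmt_8 (d : ℕ) (hd : 0 < d) (ζ : ℂ) (hζ : IsPrimitiveRoot ζ d)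
    (A : Type) [Ring A] [Algebra ℂ A] (S : SkewLaurentAlgebra d ζ A)
    (n : ℕ) (hn : 1 ≤ n) :
    Nonempty
      ((⁅(⊤ : LieIdeal ℂ (Matrix (Fin n) (Fin n) A)),
          (⊤ : LieIdeal ℂ (Matrix (Fin n) (Fin n) A))⁆ :
          LieIdeal ℂ (Matrix (Fin n) (Fin n) A))
        ≃ₗ⁅ℂ⁆
        (⁅(⊤ : LieIdeal ℂ (Matrix (Fin (n * d)) (Fin (n * d)) (LaurentPolynomial ℂ))),
          (⊤ : LieIdeal ℂ (Matrix (Fin (n * d)) (Fin (n * d)) (LaurentPolynomial ℂ)))⁆ :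
          LieIdeal ℂ (Matrix (Fin (n * d)) (Fin (n * d)) (LaurentPolynomial ℂ)))) :=
  stmt_8_general d hd ζ hζ A S n
end

section
/- Let n ≥ 2, let L = 𝔰𝔩_n(ℂ[u^{±1}]⋊Γ), and for each k ∈ ℤ let L_k be the intersection of L with the ℂ-span of the matrices E_{ab}(u^k ξ^i) (1 ≤ a,b ≤ n, 0 ≤ i ≤ d−1), so that L = ⨁_{k∈ℤ} L_k is a ℤ-grading of L. Then L is graded simple: every Lie ideal I of L satisfying I = ∑_{k∈ℤ} (I ∩ L_k) is either {0} or all of L. -/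
section Aux

variable {d : ℕ} {ζ : ℂ} {A : Type} [Ring A] [Algebra ℂ A]

lemma zpow_congr (hd : 0 < d) (hζ : IsPrimitiveRoot ζ d) {a c : ℤ}
    (h : (d : ℤ) ∣ (a - c)) : ζ ^ a = ζ ^ c := by
  obtain ⟨t, ht⟩ := h
  have hz : ζ ≠ 0 := hζ.ne_zero hd.ne'
  have ha : a = c + d * t := by omega
  rw [ha, zpow_add₀ hz, zpow_mul, zpow_natCast, hζ.pow_eq_one, one_zpow, mul_one]

lemma int_emod_sub_dvd (a : ℤ) (d : ℕ) : (d : ℤ) ∣ a % d - a :=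
  ⟨-(a / d), by rw [Int.emod_def]; ring⟩

lemma zmod_val_add_dvd (hd : 0 < d) (i₁ i₂ : ZMod d) :
    (d : ℤ) ∣ ((i₁ + i₂).val : ℤ) - (i₁.val + i₂.val) := by
  haveI : NeZero d := ⟨hd.ne'⟩
  rw [ZMod.val_add i₁ i₂]
  push_cast
  exact int_emod_sub_dvd _ _

lemma zmod_val_neg_dvd (hd : 0 < d) (i : ZMod d) :
    (d : ℤ) ∣ ((-i).val : ℤ) + i.val := by
  haveI : NeZero d := ⟨hd.ne'⟩
  have h := zmod_val_add_dvd hd (-i) i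
  rw [neg_add_cancel] at h
  have h0 : ((0 : ZMod d).val : ℤ) = 0 := by simp [ZMod.val_zero]
  rw [h0, zero_sub] at h
  exact dvd_neg.mp h

end Aux

section Aux2

variable {d : ℕ} {ζ : ℂ} {A : Type} [Ring A] [Algebra ℂ A] (S : SkewLaurentAlgebra d ζ A)

lemma repr_b (j : ℤ) (i : ZMod d) :
    S.basis.repr (S.b j i) = Finsupp.single (j, i) 1 := by
  rw [← S.basis_eq, S.basis.repr_self]

lemma b_central (hd : 0 < d) (hζ : IsPrimitiveRoot ζ d) {j : ℤ} (hj : (d : ℤ) ∣ j)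
    (x : A) : S.b j 0 * x = x * S.b j 0 := by
  haveI : NeZero d := ⟨hd.ne'⟩
  have : LinearMap.mulLeft ℂ (S.b j 0) = LinearMap.mulRight ℂ (S.b j 0) := by
    apply S.basis.ext
    rintro ⟨j₂, i₂⟩
    rw [S.basis_eq]
    simp only [LinearMap.mulLeft_apply, LinearMap.mulRight_apply]
    rw [S.b_mul, S.b_mul]
    have h1 : ((0 : ZMod d).val : ℤ) * j₂ = 0 := by simp [ZMod.val_zero]
    have h2 : ζ ^ ((i₂.val : ℤ) * j) = ζ ^ ((0 : ℤ)) :=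
      zpow_congr hd hζ (by rw [sub_zero]; exact Dvd.dvd.mul_left hj _)
    rw [h1, h2, zpow_zero, zero_add, add_zero, add_comm]
  exact LinearMap.congr_fun this x

lemma commutator_repr_central (hd : 0 < d) (hζ : IsPrimitiveRoot ζ d) {k : ℤ}
    (hk : (d : ℤ) ∣ k) (y z : A) :
    S.basis.repr (y * z - z * y) ((k, 0) : ℤ × ZMod d) = 0 := by
  haveI : NeZero d := ⟨hd.ne'⟩
  -- reduce to basis elements in both arguments
  have key : ∀ (j₁ j₂ : ℤ) (i₁ i₂ : ZMod d),
      S.basis.repr (S.b j₁ i₁ * S.b j₂ i₂ - S.b j₂ i₂ * S.b j₁ i₁) ((k, 0) : ℤ × ZMod d) = 0 := by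
    intro j₁ j₂ i₁ i₂
    rw [S.b_mul, S.b_mul, map_sub, map_smul, map_smul, repr_b, repr_b]
    by_cases h : j₁ + j₂ = k ∧ i₁ + i₂ = 0
    · obtain ⟨hj, hi⟩ := h
      have hi' : i₂ + i₁ = 0 := by rw [add_comm]; exact hi
      have hj' : j₂ + j₁ = k := by omega
      rw [hj, hi, hj', hi']
      simp only [Finsupp.smul_single, smul_eq_mul, mul_one, Finsupp.single_apply, if_pos rfl,
        Finsupp.sub_apply, Finsupp.single_eq_same]
      have : ζ ^ ((i₁.val : ℤ) * j₂) = ζ ^ ((i₂.val : ℤ) * j₁) := by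
        apply zpow_congr hd hζ
        -- d ∣ i₁ j₂ - i₂ j₁ ; use i₁ + i₂ ≡ 0 and j₁ + j₂ = k ≡ 0
        have h1 : (d : ℤ) ∣ ((i₁.val : ℤ) + i₂.val) := by
          have := zmod_val_add_dvd hd i₁ i₂
          rw [hi] at this
          have h0 : (((0 : ZMod d)).val : ℤ) = 0 := by simp [ZMod.val_zero]
          rw [h0, zero_sub] at this
          exact dvd_neg.mp this
        have h2 : (d : ℤ) ∣ j₁ + j₂ := hj ▸ hk
        -- i₁ j₂ - i₂ j₁ = i₁ (j₁ + j₂) - (i₁ + i₂) j₁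
        have : (i₁.val : ℤ) * j₂ - (i₂.val : ℤ) * j₁
            = (i₁.val : ℤ) * (j₁ + j₂) - ((i₁.val : ℤ) + i₂.val) * j₁ := by ring
        rw [this]
        exact dvd_sub (h2.mul_left _) (h1.mul_right _)
      rw [this, sub_self]
    · have h1 : ((j₁ + j₂, i₁ + i₂) : ℤ × ZMod d) ≠ (k, 0) := by
        intro he
        exact h ⟨(Prod.ext_iff.mp he).1, (Prod.ext_iff.mp he).2⟩
      have h2 : ((j₂ + j₁, i₂ + i₁) : ℤ × ZMod d) ≠ (k, 0) := by
        rw [add_comm j₂ j₁, add_comm i₂ i₁]; exact h1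
      rw [Finsupp.smul_single, Finsupp.smul_single, Finsupp.sub_apply,
        Finsupp.single_apply, Finsupp.single_apply, if_neg h1, if_neg h2, sub_self]
  -- bilinear extension
  have step1 : ∀ (j₂ : ℤ) (i₂ : ZMod d) (y : A),
      S.basis.repr (y * S.b j₂ i₂ - S.b j₂ i₂ * y) ((k, 0) : ℤ × ZMod d) = 0 := by
    intro j₂ i₂ y
    let f : A →ₗ[ℂ] ℂ :=
      (Finsupp.lapply ((k, 0) : ℤ × ZMod d)).comp ((S.basis.repr : A →ₗ[ℂ] _).comp
        (LinearMap.mulRight ℂ (S.b j₂ i₂) - LinearMap.mulLeft ℂ (S.b j₂ i₂)))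
    have hf : f = 0 := by
      apply S.basis.ext
      rintro ⟨j₁, i₁⟩
      rw [S.basis_eq]
      simpa [f, LinearMap.sub_apply] using key j₁ j₂ i₁ i₂
    simpa [f, LinearMap.sub_apply] using LinearMap.congr_fun hf y
  let g : A →ₗ[ℂ] ℂ :=
    (Finsupp.lapply ((k, 0) : ℤ × ZMod d)).comp ((S.basis.repr : A →ₗ[ℂ] _).comp
      (LinearMap.mulLeft ℂ y - LinearMap.mulRight ℂ y))
  have hg : g = 0 := by
    apply S.basis.ext
    rintro ⟨j₂, i₂⟩
    rw [S.basis_eq]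
    simpa [g, LinearMap.sub_apply] using step1 j₂ i₂ y
  simpa [g, LinearMap.sub_apply] using LinearMap.congr_fun hg z

section T2
variable {A : Type} [Ring A] [Algebra ℂ A] {n : ℕ}

/-- `stdBasisMatrix p q` as a linear map in the entry. -/
def ELM (p q : Fin n) : A →ₗ[ℂ] Matrix (Fin n) (Fin n) A where
  toFun := Matrix.single p q
  map_add' x y := Matrix.single_add p q x y
  map_smul' c x := (Matrix.smul_single c p q x).symm

@[simp] lemma ELM_apply (p q : Fin n) (x : A) : ELM p q x = Matrix.single p q x := rfl

variable (L I : Submodule ℂ (Matrix (Fin n) (Fin n) A))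

lemma offdiag_mem_L
    (hL : L = Submodule.span ℂ {X : Matrix (Fin n) (Fin n) A | ∃ Y Z, X = Y * Z - Z * Y})
    {p q : Fin n} (hpq : p ≠ q) (x : A) : Matrix.single p q x ∈ L := by
  rw [hL]
  apply Submodule.subset_span
  refine ⟨Matrix.single p q x, Matrix.single q q 1, ?_⟩
  rw [Matrix.single_mul_single_same, Matrix.single_mul_single_of_ne (h := hpq.symm), mul_one, sub_zero]

lemma c1
    (hL : L = Submodule.span ℂ {X : Matrix (Fin n) (Fin n) A | ∃ Y Z, X = Y * Z - Z * Y})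
    (hIbr : ∀ x ∈ L, ∀ y ∈ I, x * y - y * x ∈ I)
    {p q : Fin n} (hpq : p ≠ q) (y z w : A)
    (hy : Matrix.single p q y ∈ I) :
    Matrix.single p q (y * z * w + w * (z * y)) ∈ I := by
  have hD := hIbr _ (offdiag_mem_L L hL hpq.symm z) _ hy
  rw [Matrix.single_mul_single_same, Matrix.single_mul_single_same] at hD
  have h2 := hIbr _ (offdiag_mem_L L hL hpq w) _ hD
  rw [mul_sub, sub_mul, Matrix.single_mul_single_same,
    Matrix.single_mul_single_of_ne (h := hpq.symm), Matrix.single_mul_single_of_ne (h := hpq.symm),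
    Matrix.single_mul_single_same, zero_sub, sub_neg_eq_add, sub_zero,
    ← Matrix.single_add] at h2
  have : w * (z * y) + y * z * w = y * z * w + w * (z * y) := add_comm _ _
  rwa [this] at h2

end T2

section T3
variable {d : ℕ} {ζ : ℂ} {A : Type} [Ring A] [Algebra ℂ A] (S : SkewLaurentAlgebra d ζ A)
  {n : ℕ} (L I : Submodule ℂ (Matrix (Fin n) (Fin n) A))

lemma zeta_val_one (hd : 0 < d) (hζ : IsPrimitiveRoot ζ d) (j : ℤ) :
    ζ ^ (((1 : ZMod d).val : ℤ) * j) = ζ ^ j := by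
  haveI : NeZero d := ⟨hd.ne'⟩
  apply zpow_congr hd hζ
  have h1 : ((1 : ZMod d).val : ℤ) = (1 : ℤ) % d := by
    rw [ZMod.val_one_eq_one_mod]
    exact_mod_cast Int.natCast_mod 1 d
  rw [h1]
  have h2 : (d : ℤ) ∣ (1 : ℤ) % d - 1 := int_emod_sub_dvd 1 d
  obtain ⟨t, ht⟩ := h2
  exact ⟨t * j, by rw [show (1:ℤ) % d * j - j = ((1:ℤ) % d - 1) * j by ring, ht]; ring⟩

lemma zeta_zpow_ne_one {m : ℤ} (hd : 0 < d) (hζ : IsPrimitiveRoot ζ d)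
    (hm : ¬ (d : ℤ) ∣ m) : ζ ^ m ≠ 1 := by
  intro h
  exact hm ((hζ.zpow_eq_one_iff_dvd m).mp h)

lemma val_not_dvd (hd : 0 < d) {i : ZMod d} (hi : i ≠ 0) : ¬ (d : ℤ) ∣ (i.val : ℤ) := by
  haveI : NeZero d := ⟨hd.ne'⟩
  intro h
  have h1 : i.val < d := ZMod.val_lt i
  have h2 : i.val ≠ 0 := fun h0 => hi ((ZMod.val_eq_zero i).mp h0)
  have := Int.le_of_dvd (by exact_mod_cast Nat.pos_of_ne_zero h2) h
  omega

lemma c2 (hd : 0 < d) (hζ : IsPrimitiveRoot ζ d)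
    (hL : L = Submodule.span ℂ {X : Matrix (Fin n) (Fin n) A | ∃ Y Z, X = Y * Z - Z * Y})
    (hIbr : ∀ x ∈ L, ∀ y ∈ I, x * y - y * x ∈ I)
    {p q : Fin n} (hpq : p ≠ q) (y : A)
    (hy : Matrix.single p q y ∈ I) (j : ℤ) (i : ZMod d) :
    Matrix.single p q (y * S.b j i) ∈ I ∧
      Matrix.single p q (S.b j i * y) ∈ I := by
  haveI : NeZero d := ⟨hd.ne'⟩
  set u := S.b j i with hu
  have inst0 : ELM p q (y * u + u * y) ∈ I := by
    have h := c1 L I hL hIbr hpq y 1 u hy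
    rw [mul_one, one_mul] at h
    exact h
  -- helper to finish once we know `u * y`-membership and `inst0`
  have finish1 : ELM p q (u * y) ∈ I → ELM p q (y * u) ∈ I := by
    intro h
    have := I.sub_mem inst0 h
    rw [← map_sub, add_sub_cancel_right] at this
    exact this
  have finish2 : ELM p q (y * u) ∈ I → ELM p q (u * y) ∈ I := by
    intro h
    have := I.sub_mem inst0 h
    rw [← map_sub, add_sub_cancel_left] at this
    exact this
  by_cases hj : (d : ℤ) ∣ j
  · by_cases hi : i = 0
    · -- central case
      subst hi
      have hcent : ∀ x : A, u * x = x * u := fun x => b_central S hd hζ hj x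
      have h2 : ELM p q ((2 : ℂ) • (y * u)) ∈ I := by
        have : y * u + u * y = (2 : ℂ) • (y * u) := by
          rw [hcent y, two_smul]
        rwa [this] at inst0
      rw [map_smul] at h2
      have hyu : ELM p q (y * u) ∈ I := by
        have := I.smul_mem ((2 : ℂ)⁻¹) h2
        rwa [smul_smul, inv_mul_cancel₀ (two_ne_zero), one_smul] at this
      exact ⟨hyu, by rw [hcent y]; exact hyu⟩
    · -- i ≠ 0 : use z = b 1 0, w = b (j-1) i
      have h := c1 L I hL hIbr hpq y (S.b 1 0) (S.b (j-1) i) hy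
      have hzw : S.b 1 0 * S.b (j-1) i = u := by
        rw [S.b_mul]
        have h0 : (((0 : ZMod d)).val : ℤ) * (j - 1) = 0 := by simp [ZMod.val_zero]
        rw [h0, zpow_zero, one_smul, show (1 : ℤ) + (j - 1) = j by ring, zero_add]
      have hwz : S.b (j-1) i * S.b 1 0 = (ζ ^ ((i.val : ℤ))) • u := by
        rw [S.b_mul, mul_one, show j - 1 + 1 = j by ring, add_zero]
      rw [mul_assoc y, hzw, ← mul_assoc, hwz, smul_mul_assoc] at h
      -- h : ELM p q (y*u + ζ^i.val • (u*y)) ∈ I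
      have hdiff := I.sub_mem h inst0
      rw [show Matrix.single p q (y * u + ζ ^ ((i.val : ℤ)) • (u * y)) = ELM p q (y * u + ζ ^ ((i.val : ℤ)) • (u * y)) from rfl, ← map_sub] at hdiff
      have heq : y * u + ζ ^ ((i.val : ℤ)) • (u * y) - (y * u + u * y)
          = (ζ ^ ((i.val : ℤ)) - 1) • (u * y) := by
        rw [sub_smul, one_smul]; abel
      rw [heq] at hdiff
      have hne : ζ ^ ((i.val : ℤ)) - 1 ≠ 0 := by
        intro h0
        exact zeta_zpow_ne_one hd hζ (val_not_dvd hd hi) (by linear_combination h0)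
      have huy : ELM p q (u * y) ∈ I := by
        have := I.smul_mem (ζ ^ ((i.val : ℤ)) - 1)⁻¹ hdiff
        rwa [map_smul, smul_smul, inv_mul_cancel₀ hne, one_smul] at this
      exact ⟨finish1 huy, huy⟩
  · -- ¬ d ∣ j : use z = b 0 1, w = b j (i-1)
    have h := c1 L I hL hIbr hpq y (S.b 0 1) (S.b j (i-1)) hy
    have hzw : S.b 0 1 * S.b j (i-1) = (ζ ^ j) • u := by
      rw [S.b_mul, zeta_val_one hd hζ j, zero_add, add_sub_cancel]
    have hwz : S.b j (i-1) * S.b 0 1 = u := by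
      rw [S.b_mul, mul_zero, zpow_zero, one_smul, add_zero, sub_add_cancel]
    rw [mul_assoc y, hzw, ← mul_assoc, hwz, mul_smul_comm] at h
    have hdiff := I.sub_mem h inst0
    rw [show Matrix.single p q (ζ ^ j • (y * u) + u * y) = ELM p q (ζ ^ j • (y * u) + u * y) from rfl, ← map_sub] at hdiff
    have heq : ζ ^ j • (y * u) + u * y - (y * u + u * y) = (ζ ^ j - 1) • (y * u) := by
      rw [sub_smul, one_smul]; abel
    rw [heq] at hdiff
    have hne : ζ ^ j - 1 ≠ 0 := by
      intro h0
      exact zeta_zpow_ne_one hd hζ hj (by linear_combination h0)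
    have hyu : ELM p q (y * u) ∈ I := by
      have := I.smul_mem (ζ ^ j - 1)⁻¹ hdiff
      rwa [map_smul, smul_smul, inv_mul_cancel₀ hne, one_smul] at this
    exact ⟨hyu, finish2 hyu⟩

lemma c3 (hd : 0 < d) (hζ : IsPrimitiveRoot ζ d)
    (hL : L = Submodule.span ℂ {X : Matrix (Fin n) (Fin n) A | ∃ Y Z, X = Y * Z - Z * Y})
    (hIbr : ∀ x ∈ L, ∀ y ∈ I, x * y - y * x ∈ I)
    {p q : Fin n} (hpq : p ≠ q) {y : A} (hy0 : y ≠ 0) {m : ℤ}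
    (hyA : y ∈ Submodule.span ℂ (Set.range (S.b m)))
    (hy : Matrix.single p q y ∈ I) :
    ∀ x : A, Matrix.single p q x ∈ I := by
  haveI : NeZero d := ⟨hd.ne'⟩
  obtain ⟨c, hc⟩ := (Submodule.mem_span_range_iff_exists_fun ℂ).mp hyA
  have hex : ∃ i₀ : ZMod d, c i₀ ≠ 0 := by
    by_contra hno
    push_neg at hno
    apply hy0
    rw [← hc]
    exact Finset.sum_eq_zero fun i _ => by rw [hno i, zero_smul]
  obtain ⟨i₀, hi₀⟩ := hex
  -- z = y * b (-m) 0
  have hz : y * S.b (-m) 0 = ∑ i : ZMod d, (c i * ζ ^ ((i.val : ℤ) * (-m))) • S.b 0 i := by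
    rw [← hc, Finset.sum_mul]
    refine Finset.sum_congr rfl fun i _ => ?_
    rw [smul_mul_assoc, S.b_mul, smul_smul, show m + -m = (0:ℤ) by ring, add_zero]
  have hzI : Matrix.single p q (y * S.b (-m) 0) ∈ I :=
    (c2 S L I hd hζ hL hIbr hpq y hy (-m) 0).1
  -- conjugates
  have hz2 : ∀ j : ℕ, S.b (-(j:ℤ)) 0 * (y * S.b (-m) 0) * S.b (j:ℤ) 0
      = ∑ i : ZMod d, (c i * ζ ^ ((i.val : ℤ) * (-m)) * ζ ^ ((i.val : ℤ) * j)) • S.b 0 i := by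
    intro j
    rw [hz, Finset.mul_sum, Finset.sum_mul]
    refine Finset.sum_congr rfl fun i _ => ?_
    have h1 : S.b (-(j:ℤ)) 0 * S.b 0 i = S.b (-(j:ℤ)) i := by
      rw [S.b_mul, show (((0:ZMod d).val : ℤ)) * 0 = 0 by simp [ZMod.val_zero], zpow_zero,
        one_smul, add_zero, zero_add]
    have h2 : S.b (-(j:ℤ)) i * S.b (j:ℤ) 0 = ζ ^ ((i.val:ℤ) * (j:ℤ)) • S.b 0 i := by
      rw [S.b_mul, show (-(j:ℤ) + (j:ℤ)) = 0 by ring, add_zero]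
    rw [mul_smul_comm, smul_mul_assoc, h1, h2, smul_smul]
  have hz2I : ∀ j : ℕ, Matrix.single p q
      (S.b (-(j:ℤ)) 0 * (y * S.b (-m) 0) * S.b (j:ℤ) 0) ∈ I := by
    intro j
    have h1 := (c2 S L I hd hζ hL hIbr hpq _ hzI (-(j:ℤ)) 0).2
    exact (c2 S L I hd hζ hL hIbr hpq _ h1 (j:ℤ) 0).1
  -- Fourier combination
  set w : A := ∑ j ∈ Finset.range d,
      (ζ ^ (-((i₀.val : ℤ)) * j)) • (S.b (-(j:ℤ)) 0 * (y * S.b (-m) 0) * S.b (j:ℤ) 0) with hwdef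
  have hwI : Matrix.single p q w ∈ I := by
    show ELM p q w ∈ I
    rw [hwdef, map_sum]
    exact Submodule.sum_mem I fun j _ => by
      rw [map_smul]; exact I.smul_mem _ (hz2I j)
  have hgeom : ∀ i : ZMod d, i ≠ i₀ →
      ∑ j ∈ Finset.range d, (ζ ^ ((i.val : ℤ) - i₀.val)) ^ j = 0 := by
    intro i hi
    have hvne : (i.val : ℤ) - i₀.val ≠ 0 := by
      intro h0
      apply hi
      have : i.val = i₀.val := by omega
      exact ZMod.val_injective d this
    have hnd : ¬ (d:ℤ) ∣ ((i.val : ℤ) - i₀.val) := by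
      intro hdvd
      have h1 : i.val < d := ZMod.val_lt i
      have h2 : i₀.val < d := ZMod.val_lt i₀
      rcases lt_trichotomy ((i.val:ℤ) - i₀.val) 0 with hlt | heq | hgt
      · have := Int.le_of_dvd (by omega) (dvd_neg.mpr hdvd); omega
      · exact hvne heq
      · have := Int.le_of_dvd hgt hdvd; omega
    have hne1 : ζ ^ ((i.val : ℤ) - i₀.val) ≠ 1 := zeta_zpow_ne_one hd hζ hnd
    rw [geom_sum_eq hne1]
    have : (ζ ^ ((i.val : ℤ) - i₀.val)) ^ d = 1 := by
      rw [← zpow_natCast, ← zpow_mul]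
      exact (hζ.zpow_eq_one_iff_dvd _).mpr ⟨(i.val : ℤ) - i₀.val, by ring⟩
    rw [this, sub_self, zero_div]
  have hw : w = ((d : ℂ) * (c i₀ * ζ ^ ((i₀.val : ℤ) * (-m)))) • S.b 0 i₀ := by
    rw [hwdef]
    have : ∀ j ∈ Finset.range d, (ζ ^ (-((i₀.val : ℤ)) * j)) •
        (S.b (-(j:ℤ)) 0 * (y * S.b (-m) 0) * S.b (j:ℤ) 0)
        = ∑ i : ZMod d, ((c i * ζ ^ ((i.val : ℤ) * (-m))) * (ζ ^ ((i.val : ℤ) - i₀.val)) ^ j) • S.b 0 i := by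
      intro j _
      rw [hz2 j, Finset.smul_sum]
      refine Finset.sum_congr rfl fun i _ => ?_
      rw [smul_smul]
      congr 1
      have hzne : ζ ≠ 0 := hζ.ne_zero hd.ne'
      have hmerge : ζ ^ (-((i₀.val:ℤ)) * (j:ℤ)) * ζ ^ ((i.val : ℤ) * (j:ℤ))
          = (ζ ^ ((i.val : ℤ) - i₀.val)) ^ j := by
        rw [← zpow_natCast (ζ ^ ((i.val : ℤ) - (i₀.val:ℤ))), ← zpow_mul, ← zpow_add₀ hzne]
        congr 1
        ring
      rw [← hmerge]
      ring
    rw [Finset.sum_congr rfl this, Finset.sum_comm]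
    have : ∀ i : ZMod d, ∑ j ∈ Finset.range d,
        ((c i * ζ ^ ((i.val : ℤ) * (-m))) * (ζ ^ ((i.val : ℤ) - i₀.val)) ^ j) • S.b 0 i
        = ((c i * ζ ^ ((i.val : ℤ) * (-m))) * ∑ j ∈ Finset.range d, (ζ ^ ((i.val : ℤ) - i₀.val)) ^ j) • S.b 0 i := by
      intro i
      rw [← Finset.sum_smul, Finset.mul_sum]
    rw [Finset.sum_congr rfl (fun i _ => this i)]
    rw [Finset.sum_eq_single i₀]
    · rw [sub_self, zpow_zero]
      simp only [one_pow, Finset.sum_const, Finset.card_range, nsmul_eq_mul, mul_one]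
      ring_nf
    · intro i _ hi
      rw [hgeom i hi, mul_zero, zero_smul]
    · intro h
      exact absurd (Finset.mem_univ i₀) h
  have hscal : ((d : ℂ) * (c i₀ * ζ ^ ((i₀.val : ℤ) * (-m)))) ≠ 0 := by
    apply mul_ne_zero
    · exact_mod_cast Nat.cast_ne_zero.mpr hd.ne'
    · exact mul_ne_zero hi₀ (zpow_ne_zero _ (hζ.ne_zero hd.ne'))
  have hbI : Matrix.single p q (S.b 0 i₀) ∈ I := by
    have : ELM p q w ∈ I := hwI
    rw [hw, map_smul] at this
    have h2 := I.smul_mem (((d : ℂ) * (c i₀ * ζ ^ ((i₀.val : ℤ) * (-m)))))⁻¹ this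
    rwa [smul_smul, inv_mul_cancel₀ hscal, one_smul] at h2
  have honeI : Matrix.single p q (1 : A) ∈ I := by
    have := (c2 S L I hd hζ hL hIbr hpq _ hbI 0 (-i₀)).1
    rwa [S.b_mul, show (0:ℤ) + 0 = 0 by ring, add_neg_cancel, mul_zero, zpow_zero, one_smul,
      S.b_one] at this
  intro x
  have hxmem : x ∈ Submodule.span ℂ (Set.range S.basis) := by
    rw [S.basis.span_eq]; exact Submodule.mem_top
  have hsub : Set.range S.basis ⊆ (Submodule.comap (ELM p q) I : Set A) := by
    rintro _ ⟨⟨j, i⟩, rfl⟩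
    rw [S.basis_eq]
    show ELM p q (S.b j i) ∈ I
    have := (c2 S L I hd hζ hL hIbr hpq _ honeI j i).2
    rwa [mul_one] at this
  have := Submodule.span_le.mpr hsub hxmem
  exact this

lemma d1 (hL : L = Submodule.span ℂ {X : Matrix (Fin n) (Fin n) A | ∃ Y Z, X = Y * Z - Z * Y})
    (hIbr : ∀ x ∈ L, ∀ y ∈ I, x * y - y * x ∈ I)
    {p q : Fin n} (hpq : p ≠ q) (hall : ∀ x : A, Matrix.single p q x ∈ I) :
    ∀ (a b : Fin n), a ≠ b → ∀ x : A, Matrix.single a b x ∈ I := by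
  have hqp : ∀ x : A, Matrix.single q p x ∈ I := by
    intro x
    have hD := hIbr _ (offdiag_mem_L L hL hpq.symm (1:A)) _ (hall x)
    rw [Matrix.single_mul_single_same, Matrix.single_mul_single_same, one_mul, mul_one] at hD
    have h2 := hIbr _ (offdiag_mem_L L hL hpq.symm (1:A)) _ hD
    rw [mul_sub, sub_mul, Matrix.single_mul_single_of_ne (h := hpq),
      Matrix.single_mul_single_same, Matrix.single_mul_single_same,
      Matrix.single_mul_single_of_ne (h := hpq)] at h2
    have h3 : ((0 : Matrix (Fin n) (Fin n) A) - Matrix.single q p (1*x))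
        - (Matrix.single q p (x*1) - 0)
        = (-2 : ℂ) • Matrix.single q p x := by
      rw [one_mul, mul_one, zero_sub, sub_zero, neg_smul, two_smul]
      abel
    rw [h3] at h2
    have h4 := I.smul_mem ((-2 : ℂ))⁻¹ h2
    rwa [smul_smul, inv_mul_cancel₀ (by norm_num), one_smul] at h4
  intro a b hab x
  by_cases hbq : b = q
  · subst hbq
    by_cases hap : a = p
    · subst hap; exact hall x
    · have h := hIbr _ (offdiag_mem_L L hL hap (1:A)) _ (hall x)
      rw [Matrix.single_mul_single_same, Matrix.single_mul_single_of_ne (h := hab.symm),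
        one_mul, sub_zero] at h
      exact h
  · by_cases hbp : b = p
    · subst hbp
      by_cases haq : a = q
      · subst haq; exact hqp x
      · have h := hIbr _ (offdiag_mem_L L hL haq (1:A)) _ (hqp x)
        rw [Matrix.single_mul_single_same, Matrix.single_mul_single_of_ne (h := hab.symm),
          one_mul, sub_zero] at h
        exact h
    · have hqb : q ≠ b := fun h => hbq h.symm
      have hpb : Matrix.single p b x ∈ I := by
        have h := hIbr _ (offdiag_mem_L L hL hqb (1:A)) _ (hall x)
        rw [Matrix.single_mul_single_of_ne (h := hbp),
          Matrix.single_mul_single_same, mul_one, zero_sub] at h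
        have := I.neg_mem h
        rwa [neg_neg] at this
      by_cases hap : a = p
      · subst hap; exact hpb
      · have h := hIbr _ (offdiag_mem_L L hL hap (1:A)) _ hpb
        rw [Matrix.single_mul_single_same, Matrix.single_mul_single_of_ne (h := hab.symm),
          one_mul, sub_zero] at h
        exact h

lemma d2 (hL : L = Submodule.span ℂ {X : Matrix (Fin n) (Fin n) A | ∃ Y Z, X = Y * Z - Z * Y})
    (hIbr : ∀ x ∈ L, ∀ y ∈ I, x * y - y * x ∈ I)
    (hall : ∀ (a b : Fin n), a ≠ b → ∀ x : A, Matrix.single a b x ∈ I)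
    {a b : Fin n} (hab : a ≠ b) (x : A) :
    Matrix.single a a x - Matrix.single b b x ∈ I := by
  have h := hIbr _ (offdiag_mem_L L hL hab.symm (1:A)) _ (hall a b hab x)
  rw [Matrix.single_mul_single_same, Matrix.single_mul_single_same, one_mul, mul_one] at h
  have := I.neg_mem h
  rwa [neg_sub] at this

lemma d3 (hL : L = Submodule.span ℂ {X : Matrix (Fin n) (Fin n) A | ∃ Y Z, X = Y * Z - Z * Y})
    (hIbr : ∀ x ∈ L, ∀ y ∈ I, x * y - y * x ∈ I)
    (hall : ∀ (a b : Fin n), a ≠ b → ∀ x : A, Matrix.single a b x ∈ I)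
    {a b : Fin n} (hab : a ≠ b) (x y : A) :
    Matrix.single a a (x * y - y * x) ∈ I := by
  have h := hIbr _ (offdiag_mem_L L hL hab.symm y) _ (hall a b hab x)
  rw [Matrix.single_mul_single_same, Matrix.single_mul_single_same] at h
  -- h : E b b (y*x) - E a a (x*y) ∈ I
  have h2 := d2 L I hL hIbr hall hab (y*x)
  -- h2 : E a a (y*x) - E b b (y*x) ∈ I
  have h3 := I.add_mem h h2
  have h4 : Matrix.single b b (y*x) - Matrix.single a a (x*y)
      + (Matrix.single a a (y*x) - Matrix.single b b (y*x))
      = - Matrix.single a a (x * y - y * x) := by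
    rw [show Matrix.single a a (x * y - y * x)
      = Matrix.single a a (x*y) - Matrix.single a a (y*x) from map_sub (ELM a a) _ _]
    abel
  rw [h4] at h3
  have := I.neg_mem h3
  rwa [neg_neg] at this

lemma lemE (hn : 2 ≤ n)
    (hL : L = Submodule.span ℂ {X : Matrix (Fin n) (Fin n) A | ∃ Y Z, X = Y * Z - Z * Y})
    (hIbr : ∀ x ∈ L, ∀ y ∈ I, x * y - y * x ∈ I)
    (hall : ∀ (a b : Fin n), a ≠ b → ∀ x : A, Matrix.single a b x ∈ I) :
    L ≤ I := by
  haveI : Nontrivial (Fin n) := by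
    apply Fin.nontrivial_iff_two_le.mpr hn
  have main : ∀ Y Z : Matrix (Fin n) (Fin n) A, Y * Z - Z * Y ∈ I := by
    intro Y
    induction Y using Matrix.induction_on' with
    | h_zero => intro Z; simpa using I.zero_mem
    | h_add W1 W2 h1 h2 =>
        intro Z
        have hadd := I.add_mem (h1 Z) (h2 Z)
        have heq : W1*Z - Z*W1 + (W2*Z - Z*W2) = (W1+W2)*Z - Z*(W1+W2) := by
          rw [add_mul, mul_add]; abel
        rwa [heq] at hadd
    | h_std_basis p q y =>
        intro Z
        induction Z using Matrix.induction_on' with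
        | h_zero => simpa using I.zero_mem
        | h_add V1 V2 g1 g2 =>
            have hadd := I.add_mem g1 g2
            have heq : (Matrix.single p q y * V1 - V1 * Matrix.single p q y)
                + (Matrix.single p q y * V2 - V2 * Matrix.single p q y)
                = Matrix.single p q y * (V1 + V2)
                  - (V1 + V2) * Matrix.single p q y := by
              rw [add_mul, mul_add]; abel
            rwa [heq] at hadd
        | h_std_basis r s z =>
            by_cases h1 : q = r
            · subst h1
              by_cases h2 : p = s
              · subst h2
                rw [Matrix.single_mul_single_same, Matrix.single_mul_single_same]
                by_cases h3 : p = q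
                · subst h3
                  obtain ⟨b, hb⟩ := exists_ne p
                  have h4 := d3 L I hL hIbr hall (hb.symm) y z
                  have heq : Matrix.single p p (y*z) - Matrix.single p p (z*y)
                      = Matrix.single p p (y*z - z*y) :=
                    (map_sub (ELM p p) _ _).symm
                  rwa [heq]
                · have ha := d2 L I hL hIbr hall h3 (y*z)
                  have hb := d3 L I hL hIbr hall (Ne.symm h3) y z
                  have hcomb := I.add_mem ha hb
                  have heq : (Matrix.single p p (y*z) - Matrix.single q q (y*z))
                      + Matrix.single q q (y*z - z*y)
                      = Matrix.single p p (y*z) - Matrix.single q q (z*y) := by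
                    rw [show Matrix.single q q (y*z - z*y)
                      = Matrix.single q q (y*z) - Matrix.single q q (z*y) from
                      map_sub (ELM q q) _ _]
                    abel
                  rwa [heq] at hcomb
              · rw [Matrix.single_mul_single_same,
                  Matrix.single_mul_single_of_ne (h := fun hsp => h2 hsp.symm), sub_zero]
                exact hall p s h2 _
            · by_cases h2 : p = s
              · subst h2
                rw [Matrix.single_mul_single_of_ne (h := h1), Matrix.single_mul_single_same,
                  zero_sub]
                exact I.neg_mem (hall r q (fun hrq => h1 hrq.symm) _)
              · rw [Matrix.single_mul_single_of_ne (h := h1),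
                  Matrix.single_mul_single_of_ne (h := fun hsp => h2 hsp.symm), sub_zero]
                exact I.zero_mem
  rw [hL]
  apply Submodule.span_le.mpr
  rintro X ⟨Y, Z, rfl⟩
  exact main Y Z

lemma entries_mem (k : ℤ) {X : Matrix (Fin n) (Fin n) A}
    (hX : X ∈ Submodule.span ℂ {X : Matrix (Fin n) (Fin n) A |
      ∃ (a b : Fin n) (i : ZMod d), X = Matrix.single a b (S.b k i)})
    (a b : Fin n) : X a b ∈ Submodule.span ℂ (Set.range (S.b k)) := by
  let ev : Matrix (Fin n) (Fin n) A →ₗ[ℂ] A :=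
    { toFun := fun M => M a b
      map_add' := fun _ _ => rfl
      map_smul' := fun _ _ => rfl }
  have h1 : ev X ∈ Submodule.map ev (Submodule.span ℂ {X : Matrix (Fin n) (Fin n) A |
      ∃ (a b : Fin n) (i : ZMod d), X = Matrix.single a b (S.b k i)}) :=
    Submodule.mem_map_of_mem hX
  rw [Submodule.map_span] at h1
  have h2 : ev '' {X : Matrix (Fin n) (Fin n) A |
      ∃ (a b : Fin n) (i : ZMod d), X = Matrix.single a b (S.b k i)}
      ⊆ (Submodule.span ℂ (Set.range (S.b k)) : Set A) := by
    rintro _ ⟨M, ⟨a', b', i, rfl⟩, rfl⟩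
    show Matrix.single a' b' (S.b k i) a b ∈ Submodule.span ℂ (Set.range (S.b k))
    by_cases h : a' = a ∧ b' = b
    · obtain ⟨rfl, rfl⟩ := h
      rw [Matrix.single_apply_same]
      exact Submodule.subset_span ⟨i, rfl⟩
    · rw [Matrix.single_apply_of_ne _ _ _ _ _ h]
      exact Submodule.zero_mem _
  exact Submodule.span_le.mpr h2 h1

lemma sandwich {u v : Fin n} (huv : u ≠ v) (M : Matrix (Fin n) (Fin n) A) :
    Matrix.single u v (1:A) * M * Matrix.single u v (1:A)
      = Matrix.single u v (M v u) := by
  ext a c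
  by_cases hc : c = v
  · subst hc
    rw [Matrix.mul_single_apply_same]
    by_cases ha : a = u
    · subst ha
      rw [Matrix.single_mul_apply_same, one_mul, mul_one,
        Matrix.single_apply_same]
    · rw [Matrix.single_mul_apply_of_ne _ _ _ _ _ ha, zero_mul,
        Matrix.single_apply_of_row_ne (fun h => ha h.symm)]
  · rw [Matrix.mul_single_apply_of_ne _ _ _ _ _ hc,
      Matrix.single_apply_of_col_ne _ _ (fun h => hc h.symm)]

lemma diag_bracket {X : Matrix (Fin n) (Fin n) A}
    (hoff : ∀ a b : Fin n, a ≠ b → X a b = 0)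
    {p q : Fin n} (hpq : p ≠ q) (z : A) :
    X * Matrix.single p q z - Matrix.single p q z * X
      = Matrix.single p q (X p p * z - z * X q q) := by
  ext a c
  rw [Matrix.sub_apply]
  by_cases hc : c = q
  · subst hc
    rw [Matrix.mul_single_apply_same]
    by_cases ha : a = p
    · subst ha
      rw [Matrix.single_mul_apply_same, Matrix.single_apply_same]
    · rw [Matrix.single_mul_apply_of_ne _ _ _ _ _ ha, sub_zero,
        hoff a p ha, zero_mul,
        Matrix.single_apply_of_row_ne (fun h => ha h.symm)]
  · rw [Matrix.mul_single_apply_of_ne _ _ _ _ _ hc,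
      Matrix.single_apply_of_col_ne _ _ (fun h => hc h.symm), zero_sub]
    by_cases ha : a = p
    · subst ha
      rw [Matrix.single_mul_apply_same, hoff q c (fun h => hc h.symm),
        mul_zero, neg_zero]
    · rw [Matrix.single_mul_apply_of_ne _ _ _ _ _ ha, neg_zero]

lemma trace_repr_vanish (hd : 0 < d) (hζ : IsPrimitiveRoot ζ d)
    (hL : L = Submodule.span ℂ {X : Matrix (Fin n) (Fin n) A | ∃ Y Z, X = Y * Z - Z * Y})
    {k : ℤ} (hk : (d : ℤ) ∣ k) {X : Matrix (Fin n) (Fin n) A} (hX : X ∈ L) :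
    S.basis.repr (∑ a : Fin n, X a a) ((k, 0) : ℤ × ZMod d) = 0 := by
  haveI : NeZero d := ⟨hd.ne'⟩
  let F : Matrix (Fin n) (Fin n) A →ₗ[ℂ] ℂ :=
    (Finsupp.lapply ((k, 0) : ℤ × ZMod d)).comp ((S.basis.repr : A →ₗ[ℂ] _).comp
      (Matrix.traceLinearMap (Fin n) ℂ A))
  have hFL : L ≤ LinearMap.ker F := by
    rw [hL]
    apply Submodule.span_le.mpr
    rintro _ ⟨Y, Z, rfl⟩
    have h1 : Matrix.trace (Y * Z - Z * Y)
        = ∑ a : Fin n, ∑ c : Fin n, (Y a c * Z c a - Z c a * Y a c) := by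
      rw [Matrix.trace_sub]
      have hYZ : Matrix.trace (Y * Z) = ∑ a : Fin n, ∑ c : Fin n, Y a c * Z c a := by
        simp [Matrix.trace, Matrix.diag, Matrix.mul_apply]
      have hZY : Matrix.trace (Z * Y) = ∑ a : Fin n, ∑ c : Fin n, Z c a * Y a c := by
        simp only [Matrix.trace, Matrix.diag, Matrix.mul_apply]
        exact Finset.sum_comm
      rw [hYZ, hZY, ← Finset.sum_sub_distrib]
      exact Finset.sum_congr rfl fun a _ => (Finset.sum_sub_distrib _ _).symm
    have h2 : F (Y * Z - Z * Y)
        = ∑ a : Fin n, ∑ c : Fin n,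
          S.basis.repr (Y a c * Z c a - Z c a * Y a c) ((k, 0) : ℤ × ZMod d) := by
      show S.basis.repr (Matrix.trace (Y * Z - Z * Y)) ((k, 0) : ℤ × ZMod d) = _
      rw [h1, map_sum]
      rw [Finsupp.finset_sum_apply]
      refine Finset.sum_congr rfl fun a _ => ?_
      rw [map_sum, Finsupp.finset_sum_apply]
    rw [SetLike.mem_coe, LinearMap.mem_ker, h2]
    exact Finset.sum_eq_zero fun a _ => Finset.sum_eq_zero fun c _ =>
      commutator_repr_central S hd hζ hk _ _
  have := hFL hX
  rw [LinearMap.mem_ker] at this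
  exact this

lemma repr_sum_apply (hd : 0 < d) (e : ZMod d → ℂ) (m : ℤ) {σ : ZMod d → ZMod d}
    (hσ : Function.Injective σ) (i₀ : ZMod d) :
    haveI : NeZero d := ⟨hd.ne'⟩
    S.basis.repr (∑ i : ZMod d, e i • S.b m (σ i)) ((m, σ i₀) : ℤ × ZMod d) = e i₀ := by
  haveI : NeZero d := ⟨hd.ne'⟩
  rw [map_sum, Finsupp.finset_sum_apply]
  rw [Finset.sum_eq_single i₀]
  · rw [map_smul, repr_b, Finsupp.smul_single, Finsupp.single_eq_same, smul_eq_mul, mul_one]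
  · intro i _ hne
    rw [map_smul, repr_b, Finsupp.smul_single, Finsupp.single_apply,
      if_neg (fun h => hne (hσ (Prod.ext_iff.mp h).2))]
  · intro h
    exact absurd (Finset.mem_univ i₀) h

lemma scalar_comm_b10 (hd : 0 < d) (hζ : IsPrimitiveRoot ζ d) (k : ℤ) (c : ZMod d → ℂ) :
    haveI : NeZero d := ⟨hd.ne'⟩
    (∑ i : ZMod d, c i • S.b k i) * S.b 1 0 - S.b 1 0 * (∑ i : ZMod d, c i • S.b k i)
      = ∑ i : ZMod d, (c i * (ζ ^ ((i.val : ℤ)) - 1)) • S.b (k+1) i := by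
  haveI : NeZero d := ⟨hd.ne'⟩
  rw [Finset.sum_mul, Finset.mul_sum, ← Finset.sum_sub_distrib]
  refine Finset.sum_congr rfl fun i _ => ?_
  rw [smul_mul_assoc, mul_smul_comm, S.b_mul, S.b_mul]
  rw [show ((i.val : ℤ)) * (1:ℤ) = (i.val : ℤ) by ring, add_zero,
    show ((((0:ZMod d)).val : ℤ)) * k = 0 by simp [ZMod.val_zero], zpow_zero, one_smul,
    show (1:ℤ) + k = k + 1 by ring, zero_add]
  rw [smul_smul, ← sub_smul]
  congr 1
  ring

lemma scalar_comm_b01 (hd : 0 < d) (hζ : IsPrimitiveRoot ζ d) (k : ℤ) (c : ZMod d → ℂ) :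
    haveI : NeZero d := ⟨hd.ne'⟩
    (∑ i : ZMod d, c i • S.b k i) * S.b 0 1 - S.b 0 1 * (∑ i : ZMod d, c i • S.b k i)
      = ∑ i : ZMod d, (c i * (1 - ζ ^ k)) • S.b k (i+1) := by
  haveI : NeZero d := ⟨hd.ne'⟩
  rw [Finset.sum_mul, Finset.mul_sum, ← Finset.sum_sub_distrib]
  refine Finset.sum_congr rfl fun i _ => ?_
  rw [smul_mul_assoc, mul_smul_comm, S.b_mul, S.b_mul, zeta_val_one hd hζ k]
  rw [show ((i.val : ℤ)) * (0:ℤ) = 0 by ring, zpow_zero, one_smul, add_zero,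
    zero_add, add_comm (1 : ZMod d) i]
  rw [smul_smul, ← sub_smul]
  congr 1
  ring

end T3

theorem stmt_9 (d : ℕ) (hd : 0 < d) (ζ : ℂ) (hζ : IsPrimitiveRoot ζ d)
    (A : Type) [Ring A] [Algebra ℂ A] (S : SkewLaurentAlgebra d ζ A)
    (n : ℕ) (hn : 2 ≤ n)
    (L : Submodule ℂ (Matrix (Fin n) (Fin n) A))
    (hL : L = Submodule.span ℂ
        {X : Matrix (Fin n) (Fin n) A | ∃ Y Z, X = Y * Z - Z * Y})
    (Lgr : ℤ → Submodule ℂ (Matrix (Fin n) (Fin n) A))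
    (hLgr : ∀ k : ℤ, Lgr k = L ⊓ Submodule.span ℂ
        {X : Matrix (Fin n) (Fin n) A |
          ∃ (a b : Fin n) (i : ZMod d), X = Matrix.single a b (S.b k i)}) :
    ∀ I : Submodule ℂ (Matrix (Fin n) (Fin n) A),
      I ≤ L →
      (∀ x ∈ L, ∀ y ∈ I, x * y - y * x ∈ I) →
      I = ⨆ k : ℤ, I ⊓ Lgr k →
      I = ⊥ ∨ I = L := by
  intro I hIL hIbr hIgr
  by_cases hbot : I = ⊥
  · exact Or.inl hbot
  right
  haveI : NeZero d := ⟨hd.ne'⟩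
  haveI : Nontrivial (Fin n) := Fin.nontrivial_iff_two_le.mpr hn
  have hex : ∃ k : ℤ, I ⊓ Lgr k ≠ ⊥ := by
    by_contra hno
    push_neg at hno
    exact hbot (by rw [hIgr]; exact iSup_eq_bot.mpr hno)
  obtain ⟨k, hk⟩ := hex
  obtain ⟨X, hXmem, hX0⟩ := Submodule.exists_mem_ne_zero_of_ne_bot hk
  have hXI : X ∈ I := hXmem.1
  have hXgr := hXmem.2
  rw [hLgr k] at hXgr
  have hXL : X ∈ L := hXgr.1
  have hent : ∀ a b : Fin n, X a b ∈ Submodule.span ℂ (Set.range (S.b k)) :=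
    fun a b => entries_mem S k hXgr.2 a b
  have seed : ∃ (p q : Fin n), p ≠ q ∧ ∃ (m : ℤ) (y : A), y ≠ 0 ∧
      y ∈ Submodule.span ℂ (Set.range (S.b m)) ∧ Matrix.single p q y ∈ I := by
    by_cases hoff : ∃ p q : Fin n, p ≠ q ∧ X p q ≠ 0
    · obtain ⟨p, q, hpq, hne⟩ := hoff
      refine ⟨q, p, hpq.symm, k, X p q, hne, hent p q, ?_⟩
      have heL : Matrix.single q p (1:A) ∈ L := offdiag_mem_L L hL hpq.symm 1
      have h1 := hIbr _ heL X hXI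
      have h2 := hIbr _ heL _ h1
      have hee : Matrix.single q p (1:A) * Matrix.single q p (1:A)
          = (0 : Matrix (Fin n) (Fin n) A) :=
        Matrix.single_mul_single_of_ne (1:A) q p q hpq (1:A)
      have h3 : Matrix.single q p (1:A) * (X * Matrix.single q p (1:A))
          = Matrix.single q p (X p q) := by
        rw [← mul_assoc]; exact sandwich hpq.symm X
      have h4 : (Matrix.single q p (1:A) * X) * Matrix.single q p (1:A)
          = Matrix.single q p (X p q) := sandwich hpq.symm X
      have key : Matrix.single q p (1:A)
            * (Matrix.single q p (1:A) * X - X * Matrix.single q p (1:A))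
          - (Matrix.single q p (1:A) * X - X * Matrix.single q p (1:A))
            * Matrix.single q p (1:A)
          = (-2 : ℂ) • Matrix.single q p (X p q) := by
        rw [mul_sub, sub_mul, ← mul_assoc, hee, zero_mul, h3, h4, mul_assoc, hee, mul_zero,
          zero_sub, sub_zero, neg_smul, two_smul]
        abel
      rw [key] at h2
      have h5 := I.smul_mem ((-2 : ℂ))⁻¹ h2
      rwa [smul_smul, inv_mul_cancel₀ (by norm_num), one_smul] at h5
    · push_neg at hoff
      by_cases hdg : ∃ p q : Fin n, p ≠ q ∧ X p p ≠ X q q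
      · obtain ⟨p, q, hpq, hne⟩ := hdg
        refine ⟨p, q, hpq, k, X p p * 1 - 1 * X q q, ?_, ?_, ?_⟩
        · rw [mul_one, one_mul]; exact sub_ne_zero.mpr hne
        · rw [mul_one, one_mul]; exact Submodule.sub_mem _ (hent p p) (hent q q)
        · have hbr := hIbr _ (offdiag_mem_L L hL hpq (1:A)) X hXI
          have hneg := I.neg_mem hbr
          rw [neg_sub, diag_bracket hoff hpq 1] at hneg
          exact hneg
      · push_neg at hdg
        obtain ⟨p0, q0, hp0q0⟩ : ∃ a b : Fin n, a ≠ b := exists_pair_ne (Fin n)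
        have hXdiag : ∀ a : Fin n, X a a = X p0 p0 := by
          intro a
          by_cases ha : a = p0
          · rw [ha]
          · exact hdg a p0 ha
        have hxne : X p0 p0 ≠ 0 := by
          intro h0
          apply hX0
          ext a b
          by_cases hab : a = b
          · subst hab
            rw [hXdiag a, h0, Matrix.zero_apply]
          · rw [hoff a b hab, Matrix.zero_apply]
        obtain ⟨c, hc⟩ := (Submodule.mem_span_range_iff_exists_fun ℂ).mp (hent p0 p0)
        have hcex : ∃ i₀, c i₀ ≠ 0 := by
          by_contra hno
          push_neg at hno
          apply hxne
          rw [← hc]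
          exact Finset.sum_eq_zero fun i _ => by rw [hno i, zero_smul]
        obtain ⟨i₀, hi₀⟩ := hcex
        have hbrk : ∀ z : A, Matrix.single p0 q0 (X p0 p0 * z - z * X p0 p0) ∈ I := by
          intro z
          have hbr := hIbr _ (offdiag_mem_L L hL hp0q0 z) X hXI
          have hneg := I.neg_mem hbr
          rw [neg_sub, diag_bracket hoff hp0q0 z, hXdiag q0] at hneg
          exact hneg
        by_cases hdvd : (d:ℤ) ∣ k
        · have hrepr0 : S.basis.repr (X p0 p0) ((k, 0) : ℤ × ZMod d) = c 0 := by
            rw [← hc]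
            exact repr_sum_apply S hd c k (σ := fun i => i) (fun _ _ h => h) 0
          have hc0 : c 0 = 0 := by
            have htr := trace_repr_vanish S L hd hζ hL hdvd hXL
            have hsum : (∑ a : Fin n, X a a) = (n : ℕ) • X p0 p0 := by
              rw [Finset.sum_congr rfl (fun a _ => hXdiag a)]
              rw [Finset.sum_const, Finset.card_univ, Fintype.card_fin]
            rw [hsum, map_nsmul] at htr
            have hmul : (n : ℂ) * S.basis.repr (X p0 p0) ((k, 0) : ℤ × ZMod d) = 0 := by
              simpa [Finsupp.smul_apply, nsmul_eq_mul] using htr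
            have hn0 : (n : ℂ) ≠ 0 := Nat.cast_ne_zero.mpr (by omega)
            have hz := (mul_eq_zero.mp hmul).resolve_left hn0
            rw [← hrepr0]
            exact hz
          have hi₀0 : i₀ ≠ 0 := fun h => hi₀ (h ▸ hc0)
          have heq : X p0 p0 * S.b 1 0 - S.b 1 0 * X p0 p0
              = ∑ i : ZMod d, (c i * (ζ ^ ((i.val : ℤ)) - 1)) • S.b (k+1) i := by
            conv_lhs => rw [← hc]
            exact scalar_comm_b10 S hd hζ k c
          refine ⟨p0, q0, hp0q0, k+1, X p0 p0 * S.b 1 0 - S.b 1 0 * X p0 p0, ?_, ?_, hbrk _⟩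
          · rw [heq]
            intro h0
            have hval := repr_sum_apply S hd (fun i => c i * (ζ ^ ((i.val : ℤ)) - 1)) (k+1)
              (σ := fun i => i) (fun _ _ h => h) i₀
            rw [h0] at hval
            have hzz : c i₀ * (ζ ^ ((i₀.val : ℤ)) - 1) = 0 := by
              rw [← hval]; simp
            rcases mul_eq_zero.mp hzz with h | h
            · exact hi₀ h
            · exact zeta_zpow_ne_one hd hζ (val_not_dvd hd hi₀0) (by linear_combination h)
          · rw [heq]
            exact Submodule.sum_mem _ fun i _ =>
              Submodule.smul_mem _ _ (Submodule.subset_span ⟨i, rfl⟩)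
        · have heq : X p0 p0 * S.b 0 1 - S.b 0 1 * X p0 p0
              = ∑ i : ZMod d, (c i * (1 - ζ ^ k)) • S.b k (i+1) := by
            conv_lhs => rw [← hc]
            exact scalar_comm_b01 S hd hζ k c
          refine ⟨p0, q0, hp0q0, k, X p0 p0 * S.b 0 1 - S.b 0 1 * X p0 p0, ?_, ?_, hbrk _⟩
          · rw [heq]
            intro h0
            have hval := repr_sum_apply S hd (fun i => c i * (1 - ζ ^ k)) k
              (σ := fun i => i + 1) (add_left_injective 1) i₀
            rw [h0] at hval
            have hzz : c i₀ * (1 - ζ ^ k) = 0 := by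
              rw [← hval]; simp
            rcases mul_eq_zero.mp hzz with h | h
            · exact hi₀ h
            · exact zeta_zpow_ne_one hd hζ hdvd (by linear_combination -h)
          · rw [heq]
            exact Submodule.sum_mem _ fun i _ =>
              Submodule.smul_mem _ _ (Submodule.subset_span ⟨i+1, rfl⟩)
  obtain ⟨p, q, hpq, m, y, hy0, hyA, hyI⟩ := seed
  have hall0 := c3 S L I hd hζ hL hIbr hpq hy0 hyA hyI
  have hall := d1 L I hL hIbr hpq hall0
  exact le_antisymm hIL (lemE L I hn hL hIbr hall)
end Aux2
end
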